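/- arXiv:2604.20998 — 8 statements merged into one kernel-verified Lean document; each statement's English description precedes it below -/
import Mathlib

section
/- Let E be a Fréchet space and G a Lie group with length function |·|_G. Suppose π: G → L(E) is a representation such that for each v ∈ E and each continuous seminorm p on E there exists λ > 0 with sup_{g∈G} e^{-λ|g|_G} p(π(g)v) < ∞. Then for each continuous seminorm p on E there exist constants C, λ > 0 and a continuous seminorm q on E such that p(π(g)v) ≤ C e^{λ|g|_G} q(v) for all v ∈ E and g ∈ G. -/
/-!
Fix a continuous seminorm `p`. For a rate `lam`, the vectors `v` with
`p (π g v) = O(exp (lam * ℓ g))` form a subspace `𝒜 lam`. If countably many rates cover `E`,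
then by Baire's theorem one of the closed sets `{v | ∀ g, exp (-lam * ℓ g) * p (π g v) ≤ n}` has
interior, so the subspace `𝒜 lam` containing it is all of `E`. Then the seminorms
`exp (-lam * ℓ g) • p ∘ π g` are pointwise bounded, and their supremum is continuous because a
Baire topological vector space is barrelled.

As `ℓ` may take both signs, the rates of one vector form an interval but are not upward closed.
Splitting `G` by the sign of `ℓ` and comparing with the rates of `v + w` shows that any two
vectors share a rate. Hence either every vector has a rational rate, or some vector has a single
rate, and then all vectors share it: countably many rates suffice in both cases.
-/

open Set
open scoped Uniformity

section ExpGrowth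

variable {ι E : Type*} [AddCommGroup E] [Module ℝ E] [TopologicalSpace E]

def expGrowthSubmodule (π : ι → E →L[ℝ] E) (ℓ : ι → ℝ) (p : Seminorm ℝ E) (S : Set ι)
    (lam : ℝ) : Submodule ℝ E where
  carrier := {v | ∃ M, ∀ i ∈ S, Real.exp (-lam * ℓ i) * p (π i v) ≤ M}
  zero_mem' := ⟨0, fun i _ => by simp⟩
  add_mem' := by
    rintro v w ⟨M, hM⟩ ⟨N, hN⟩
    refine ⟨M + N, fun i hi => ?_⟩
    calc Real.exp (-lam * ℓ i) * p (π i (v + w))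
        ≤ Real.exp (-lam * ℓ i) * p (π i v) + Real.exp (-lam * ℓ i) * p (π i w) := by
          rw [map_add, ← mul_add]
          gcongr
          exact map_add_le_add p _ _
      _ ≤ M + N := add_le_add (hM i hi) (hN i hi)
  smul_mem' := by
    rintro c v ⟨M, hM⟩
    refine ⟨|c| * M, fun i hi => ?_⟩
    rw [map_smul, map_smul_eq_mul, Real.norm_eq_abs, mul_left_comm]
    exact mul_le_mul_of_nonneg_left (hM i hi) (abs_nonneg c)

variable {π : ι → E →L[ℝ] E} {ℓ : ι → ℝ} {p : Seminorm ℝ E}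

local notation "𝒜" => expGrowthSubmodule π ℓ p univ
local notation "𝒜₊" => expGrowthSubmodule π ℓ p (ℓ ⁻¹' Ici 0)
local notation "𝒜₋" => expGrowthSubmodule π ℓ p (ℓ ⁻¹' Iic 0)

theorem expGrowthSubmodule_antitone_set {S T : Set ι} (hST : S ⊆ T) (lam : ℝ) :
    expGrowthSubmodule π ℓ p T lam ≤ expGrowthSubmodule π ℓ p S lam :=
  fun _ ⟨M, hM⟩ => ⟨M, fun i hi => hM i (hST hi)⟩

theorem expGrowthSubmodule_le_of_forall {S : Set ι} {a b : ℝ}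
    (h : ∀ i ∈ S, a * ℓ i ≤ b * ℓ i) :
    expGrowthSubmodule π ℓ p S a ≤ expGrowthSubmodule π ℓ p S b := by
  rintro v ⟨M, hM⟩
  refine ⟨M, fun i hi => le_trans ?_ (hM i hi)⟩
  exact mul_le_mul_of_nonneg_right (Real.exp_le_exp.2 (by linarith [h i hi])) (apply_nonneg _ _)

theorem mem_expGrowthSubmodule_union {S T : Set ι} {lam : ℝ} {v : E}
    (hS : v ∈ expGrowthSubmodule π ℓ p S lam) (hT : v ∈ expGrowthSubmodule π ℓ p T lam) :
    v ∈ expGrowthSubmodule π ℓ p (S ∪ T) lam := by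
  obtain ⟨M, hM⟩ := hS
  obtain ⟨N, hN⟩ := hT
  refine ⟨max M N, fun i hi => ?_⟩
  rcases hi with hi | hi
  exacts [(hM i hi).trans (le_max_left M N), (hN i hi).trans (le_max_right M N)]

theorem mem_expGrowthSubmodule_univ {lam : ℝ} {v : E} (hpos : v ∈ 𝒜₊ lam) (hneg : v ∈ 𝒜₋ lam) :
    v ∈ 𝒜 lam := by
  have : ℓ ⁻¹' Ici 0 ∪ ℓ ⁻¹' Iic 0 = univ := eq_univ_of_forall fun i => le_total 0 (ℓ i)
  exact this ▸ mem_expGrowthSubmodule_union hpos hneg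

theorem expGrowthSubmodule_nonneg_mono {a b : ℝ} (hab : a ≤ b) : 𝒜₊ a ≤ 𝒜₊ b :=
  expGrowthSubmodule_le_of_forall fun _ hi => mul_le_mul_of_nonneg_right hab hi

theorem expGrowthSubmodule_nonpos_anti {a b : ℝ} (hab : a ≤ b) : 𝒜₋ b ≤ 𝒜₋ a :=
  expGrowthSubmodule_le_of_forall fun _ hi => mul_le_mul_of_nonpos_right hab hi

theorem mem_expGrowthSubmodule_of_le_of_le {a b ν : ℝ} {v : E} (ha : v ∈ 𝒜 a) (hb : v ∈ 𝒜 b)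
    (haν : a ≤ ν) (hνb : ν ≤ b) : v ∈ 𝒜 ν :=
  mem_expGrowthSubmodule_univ
    (expGrowthSubmodule_nonneg_mono haν (expGrowthSubmodule_antitone_set (subset_univ _) a ha))
    (expGrowthSubmodule_nonpos_anti hνb (expGrowthSubmodule_antitone_set (subset_univ _) b hb))

theorem exists_common_rate_of_le {a b c : ℝ} {v w : E} (hab : a ≤ b) (hv : v ∈ 𝒜 a)
    (hw : w ∈ 𝒜 b) (hvw : v + w ∈ 𝒜 c) : ∃ ν, a ≤ ν ∧ v ∈ 𝒜 ν ∧ w ∈ 𝒜 ν := by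
  have restrict_nonneg : ∀ {lam} {u : E}, u ∈ 𝒜 lam → u ∈ 𝒜₊ lam :=
    fun h => expGrowthSubmodule_antitone_set (subset_univ _) _ h
  have restrict_nonpos : ∀ {lam} {u : E}, u ∈ 𝒜 lam → u ∈ 𝒜₋ lam :=
    fun h => expGrowthSubmodule_antitone_set (subset_univ _) _ h
  rcases le_total c a with hca | hac
  · refine ⟨a, le_rfl, hv, mem_expGrowthSubmodule_univ ?_
      (expGrowthSubmodule_nonpos_anti hab (restrict_nonpos hw))⟩
    simpa using sub_mem (expGrowthSubmodule_nonneg_mono hca (restrict_nonneg hvw))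
      (restrict_nonneg hv)
  rcases le_total c b with hcb | hbc
  · have hw_nonpos := expGrowthSubmodule_nonpos_anti hcb (restrict_nonpos hw)
    have hv_nonneg := expGrowthSubmodule_nonneg_mono hac (restrict_nonneg hv)
    refine ⟨c, hac, mem_expGrowthSubmodule_univ hv_nonneg ?_,
      mem_expGrowthSubmodule_univ ?_ hw_nonpos⟩
    · simpa using sub_mem (restrict_nonpos hvw) hw_nonpos
    · simpa using sub_mem (restrict_nonneg hvw) hv_nonneg
  · refine ⟨b, hab, mem_expGrowthSubmodule_univ
      (expGrowthSubmodule_nonneg_mono hab (restrict_nonneg hv)) ?_, hw⟩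
    simpa using sub_mem (expGrowthSubmodule_nonpos_anti hbc (restrict_nonpos hvw))
      (restrict_nonpos hw)

theorem exists_common_rate {a b c : ℝ} {v w : E} (hv : v ∈ 𝒜 a) (hw : w ∈ 𝒜 b)
    (hvw : v + w ∈ 𝒜 c) : ∃ ν, min a b ≤ ν ∧ v ∈ 𝒜 ν ∧ w ∈ 𝒜 ν := by
  rcases le_total a b with hab | hba
  · obtain ⟨ν, hν, hvν, hwν⟩ := exists_common_rate_of_le hab hv hw hvw
    exact ⟨ν, (min_le_left a b).trans hν, hvν, hwν⟩
  · obtain ⟨ν, hν, hwν, hvν⟩ := exists_common_rate_of_le hba hw hv (add_comm v w ▸ hvw)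
    exact ⟨ν, (min_le_right a b).trans hν, hvν, hwν⟩

theorem eq_of_mem_expGrowthSubmodule_of_forall_rat_notMem {a b : ℝ} {v : E} (ha : 0 < a)
    (hb : 0 < b) (hva : v ∈ 𝒜 a) (hvb : v ∈ 𝒜 b) (hQ : ∀ r : ℚ, 0 < (r : ℝ) → v ∉ 𝒜 r) :
    a = b := by
  have no_lt : ∀ {a b : ℝ}, 0 < a → v ∈ 𝒜 a → v ∈ 𝒜 b → ¬a < b := fun ha hva hvb hab => by
    obtain ⟨r, har, hrb⟩ := exists_rat_btwn hab
    exact hQ r (ha.trans har) (mem_expGrowthSubmodule_of_le_of_le hva hvb har.le hrb.le)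
  exact le_antisymm (not_lt.1 (no_lt hb hvb hva)) (not_lt.1 (no_lt ha hva hvb))

theorem exists_countable_rates (h : ∀ v : E, ∃ lam > 0, v ∈ 𝒜 lam) :
    ∃ D : Set ℝ, D.Countable ∧ (∀ lam ∈ D, 0 < lam) ∧ ∀ v, ∃ lam ∈ D, v ∈ 𝒜 lam := by
  by_cases hQ : ∀ v : E, ∃ r : ℚ, 0 < (r : ℝ) ∧ v ∈ 𝒜 r
  · refine ⟨range ((↑) : ℚ → ℝ) ∩ Ioi 0, (countable_range _).mono inter_subset_left,
      fun _ h => h.2, fun v => ?_⟩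
    obtain ⟨r, hr, hv⟩ := hQ v
    exact ⟨r, ⟨mem_range_self r, hr⟩, hv⟩
  push Not at hQ
  obtain ⟨v₀, hv₀⟩ := hQ
  obtain ⟨lam, hlam, hv₀lam⟩ := h v₀
  refine ⟨{lam}, countable_singleton lam, fun _ h => h ▸ hlam, fun v => ⟨lam, rfl, ?_⟩⟩
  obtain ⟨a, ha, hva⟩ := h v
  obtain ⟨c, -, hc⟩ := h (v + v₀)
  obtain ⟨ν, hν, hvν, hv₀ν⟩ := exists_common_rate hva hv₀lam hc
  rwa [← eq_of_mem_expGrowthSubmodule_of_forall_rat_notMem ((lt_min ha hlam).trans_le hν) hlam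
    hv₀ν hv₀lam hv₀]

theorem exists_expGrowthSubmodule_eq_top [BaireSpace E] [ContinuousAdd E] [ContinuousSMul ℝ E]
    (hp : Continuous p) {D : Set ℝ} (hD : D.Countable) (hcov : ∀ v, ∃ lam ∈ D, v ∈ 𝒜 lam) :
    ∃ lam ∈ D, 𝒜 lam = ⊤ := by
  have : Countable D := hD.to_subtype
  let F : D × ℕ → Set E := fun k => ⋂ i, {v | Real.exp (-k.1 * ℓ i) * p (π i v) ≤ k.2}
  have hF_closed : ∀ k, IsClosed (F k) := fun k => isClosed_iInter fun i =>
    isClosed_le (continuous_const.mul (hp.comp (π i).continuous)) continuous_const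
  have hF_cover : ⋃ k, F k = univ := eq_univ_of_forall fun v => by
    obtain ⟨lam, hlam, M, hM⟩ := hcov v
    obtain ⟨n, hn⟩ := exists_nat_ge M
    exact mem_iUnion.2 ⟨(⟨lam, hlam⟩, n), mem_iInter.2 fun i => (hM i trivial).trans hn⟩
  have hF_le : ∀ k, F k ⊆ 𝒜 k.1 := fun k v hv => ⟨k.2, fun i _ => mem_iInter.1 hv i⟩
  obtain ⟨k, hk⟩ := nonempty_interior_of_iUnion_of_closed hF_closed hF_cover
  exact ⟨k.1, k.1.2, Submodule.eq_top_of_nonempty_interior' _ (hk.mono (interior_mono (hF_le k)))⟩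

theorem exists_continuous_seminorm_of_expGrowthSubmodule_eq_top [BarrelledSpace ℝ E]
    (hp : Continuous p) {lam : ℝ} (htop : 𝒜 lam = ⊤) :
    ∃ q : Seminorm ℝ E, Continuous q ∧ ∀ v i, p (π i v) ≤ Real.exp (lam * ℓ i) * q v := by
  let r : ι → Seminorm ℝ E := fun i =>
    (Real.exp (-lam * ℓ i)).toNNReal • p.comp (π i : E →ₗ[ℝ] E)
  have hr : ∀ i v, r i v = Real.exp (-lam * ℓ i) * p (π i v) := fun _ _ =>
    congrArg (· * _) (Real.coe_toNNReal _ (Real.exp_pos _).le)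
  have hr_bdd : ∀ v, BddAbove (range fun i => r i v) := fun v => by
    obtain ⟨M, hM⟩ : v ∈ 𝒜 lam := htop ▸ Submodule.mem_top
    exact ⟨M, forall_mem_range.2 fun i => (hr i v).trans_le (hM i trivial)⟩
  have hbdd : BddAbove (range r) := Seminorm.bddAbove_range_iff.2 hr_bdd
  have hcont : Continuous ⇑(⨆ i, r i) := by
    rw [Seminorm.coe_iSup_eq hbdd]
    exact Seminorm.continuous_iSup r (fun i => continuous_const.mul (hp.comp (π i).continuous)) hbdd
  refine ⟨⨆ i, r i, hcont, fun v i => ?_⟩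
  have hri : r i v ≤ (⨆ i, r i) v := by
    rw [Seminorm.iSup_apply hbdd]
    exact le_ciSup (hr_bdd v) i
  calc p (π i v) = Real.exp (lam * ℓ i) * r i v := by
        rw [hr, ← mul_assoc, ← Real.exp_add, neg_mul, add_neg_cancel, Real.exp_zero, one_mul]
    _ ≤ Real.exp (lam * ℓ i) * (⨆ i, r i) v := by gcongr

end ExpGrowth

theorem stmt0_general
    {E : Type*} [AddCommGroup E] [Module ℝ E] [UniformSpace E] [IsUniformAddGroup E]
    [ContinuousSMul ℝ E] [CompleteSpace E]
    [TopologicalSpace.MetrizableSpace E]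
    {G : Type*} [Group G] (ℓ : G → ℝ)
    (π : G →* (E →L[ℝ] E))
    (hπ : ∀ (v : E) (p : Seminorm ℝ E), Continuous p →
      ∃ lam > 0, ∃ M : ℝ, ∀ g : G, Real.exp (-lam * ℓ g) * p (π g v) ≤ M)
    (p : Seminorm ℝ E) (hp : Continuous p) :
    ∃ C > 0, ∃ lam > 0, ∃ q : Seminorm ℝ E, Continuous q ∧
      ∀ (v : E) (g : G), p (π g v) ≤ C * Real.exp (lam * ℓ g) * q v := by
  have : (𝓤 E).IsCountablyGenerated := IsUniformAddGroup.uniformity_countably_generated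
  obtain ⟨D, hD, hD_pos, hcov⟩ := exists_countable_rates (π := π) (ℓ := ℓ) (p := p) fun v => by
    obtain ⟨lam, hlam, M, hM⟩ := hπ v p hp
    exact ⟨lam, hlam, M, fun g _ => hM g⟩
  obtain ⟨lam, hlamD, htop⟩ := exists_expGrowthSubmodule_eq_top hp hD hcov
  obtain ⟨q, hq, hbound⟩ := exists_continuous_seminorm_of_expGrowthSubmodule_eq_top hp htop
  exact ⟨1, one_pos, lam, hD_pos lam hlamD, q, hq, fun v g => by simpa using hbound v g⟩

/-- Uniform exponential growth estimate for representations of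
exponential type on a Fréchet space (Lemma 2.3 of the paper). -/
theorem stmt0
    {E : Type*} [AddCommGroup E] [Module ℝ E] [UniformSpace E] [IsUniformAddGroup E]
    [ContinuousSMul ℝ E] [LocallyConvexSpace ℝ E] [CompleteSpace E]
    [TopologicalSpace.MetrizableSpace E]
    {G : Type*} [Group G] (ℓ : G → ℝ)
    (π : G →* (E →L[ℝ] E))
    (hπ : ∀ (v : E) (p : Seminorm ℝ E), Continuous p →
      ∃ lam > 0, ∃ M : ℝ, ∀ g : G, Real.exp (-lam * ℓ g) * p (π g v) ≤ M)
    (p : Seminorm ℝ E) (hp : Continuous p) :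
    ∃ C > 0, ∃ lam > 0, ∃ q : Seminorm ℝ E, Continuous q ∧
      ∀ (v : E) (g : G), p (π g v) ≤ C * Real.exp (lam * ℓ g) * q v :=
  stmt0_general ℓ π hπ p hp
end

section
/- Let (τ_n)_{n∈ℕ} be a sequence of non-negative functions on [0,∞) such that log t = o(τ_n(t)) as t → ∞ for each n. Then there exists an increasing function σ: [0,∞) → [0,∞) satisfying σ(2t) = O(σ(t)), log t = o(σ(t)), and σ(t) = o(τ_n(t)) as t → ∞ for every n ∈ ℕ. -/
open Filter Asymptotics

/-- Minorization lemma: given countably many non-negative functions τ_n on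
[0,∞) each dominating log in the little-o sense, there is a weight function σ
(increasing, σ(2t) = O(σ(t)), log t = o(σ(t))) with σ = o(τ_n) for every n. -/
theorem stmt3 (τ : ℕ → ℝ → ℝ) (hnn : ∀ n t, 0 ≤ t → 0 ≤ τ n t)
    (hτ : ∀ n, (fun t => Real.log t) =o[atTop] τ n) :
    ∃ σ : ℝ → ℝ, MonotoneOn σ (Set.Ici 0) ∧ (∀ t, 0 ≤ t → 0 ≤ σ t) ∧
      (fun t => σ (2 * t)) =O[atTop] σ ∧ (fun t => Real.log t) =o[atTop] σ ∧
      ∀ n, σ =o[atTop] τ n := by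
  -- Step 1: thresholds M n beyond which ((n:ℝ)+1)^2 * log t ≤ τ k t for all k ≤ n
  have hM : ∀ n : ℕ, ∃ M : ℝ, 2 ≤ M ∧ ∀ t, M ≤ t → ∀ k, k ≤ n →
      ((n : ℝ) + 1) ^ 2 * Real.log t ≤ τ k t := by
    intro n
    have h : ∀ᶠ t in atTop, ∀ k ∈ Finset.range (n + 1),
        ((n : ℝ) + 1) ^ 2 * Real.log t ≤ τ k t := by
      rw [eventually_all_finset]
      intro k _
      have hc : (0 : ℝ) < 1 / ((n : ℝ) + 1) ^ 2 := by positivity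
      filter_upwards [(hτ k).def hc, eventually_ge_atTop (2 : ℝ)] with t ht h2
      have hlog : (0 : ℝ) ≤ Real.log t := Real.log_nonneg (by linarith)
      have hτnn : (0 : ℝ) ≤ τ k t := hnn k t (by linarith)
      rw [Real.norm_of_nonneg hlog, Real.norm_of_nonneg hτnn] at ht
      have hpos : (0 : ℝ) < ((n : ℝ) + 1) ^ 2 := by positivity
      calc ((n : ℝ) + 1) ^ 2 * Real.log t
          ≤ ((n : ℝ) + 1) ^ 2 * (1 / ((n : ℝ) + 1) ^ 2 * τ k t) := by
            exact mul_le_mul_of_nonneg_left ht (le_of_lt hpos)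
        _ = τ k t := by field_simp
    rw [eventually_atTop] at h
    obtain ⟨M, hMp⟩ := h
    refine ⟨max M 2, le_max_right _ _, fun t ht k hk => ?_⟩
    exact hMp t (le_trans (le_max_left _ _) ht) k (Finset.mem_range.mpr (Nat.lt_succ_of_le hk))
  choose M hM2 hMp using hM
  -- Step 2: the sequence T
  set T : ℕ → ℝ := fun n => Nat.rec 2 (fun m Tm => max (M (m + 1)) (2 * Tm)) n with hT
  have hT0 : T 0 = 2 := rfl
  have hTs : ∀ n, T (n + 1) = max (M (n + 1)) (2 * T n) := fun n => rfl
  have hT2 : ∀ n, 2 ≤ T n := by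
    intro n
    induction n with
    | zero => exact le_of_eq hT0.symm
    | succ m ih =>
      rw [hTs]
      exact le_trans (by linarith) (le_max_right _ _)
  have hTM : ∀ n, M (n + 1) ≤ T (n + 1) := fun n => by rw [hTs]; exact le_max_left _ _
  have hTdouble : ∀ n, 2 * T n ≤ T (n + 1) := fun n => by rw [hTs]; exact le_max_right _ _
  have hTstrict : StrictMono T := by
    apply strictMono_nat_of_lt_succ
    intro n
    have := hT2 n
    have := hTdouble n
    linarith
  have hTlin : ∀ n : ℕ, (n : ℝ) + 2 ≤ T n := by
    intro n
    induction n with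
    | zero => simp [hT0]
    | succ m ih =>
      have := hTdouble m
      have := hT2 m
      push_cast
      linarith
  -- the step function g
  have bddS : ∀ t : ℝ, BddAbove {n : ℕ | T n ≤ t} := by
    intro t
    refine ⟨⌈t⌉₊, fun n hn => ?_⟩
    have h1 : (n : ℝ) ≤ t := by
      have h2 := hTlin n
      have h3 : T n ≤ t := hn
      linarith
    calc n = ⌈(n : ℝ)⌉₊ := by simp
      _ ≤ ⌈t⌉₊ := Nat.ceil_mono h1
  set g : ℝ → ℕ := fun t => sSup {n : ℕ | T n ≤ t} with hg
  have hgT : ∀ t : ℝ, 2 ≤ t → T (g t) ≤ t := by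
    intro t ht
    have : g t ∈ {n : ℕ | T n ≤ t} :=
      Nat.sSup_mem ⟨0, by simpa [hT0] using ht⟩ (bddS t)
    exact this
  have hgge : ∀ (n : ℕ) (t : ℝ), T n ≤ t → n ≤ g t := by
    intro n t hn
    exact le_csSup (bddS t) hn
  have hgmono : ∀ s t : ℝ, s ≤ t → g s ≤ g t := by
    intro s t hst
    exact csSup_le' (fun m hm => le_csSup (bddS t) (le_trans hm hst))
  have hgzero : ∀ t : ℝ, t < 2 → g t = 0 := by
    intro t ht
    have : g t ≤ 0 := csSup_le' (fun m hm => by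
      exfalso
      have := hT2 m
      have : T m ≤ t := hm
      linarith [hT2 m])
    omega
  -- σ
  set σ : ℝ → ℝ := fun t => (g t : ℝ) * Real.log t with hσ
  have hσnn : ∀ t : ℝ, 0 ≤ t → 0 ≤ σ t := by
    intro t ht
    by_cases h2 : 2 ≤ t
    · have hlog : 0 ≤ Real.log t := Real.log_nonneg (by linarith)
      positivity
    · rw [hσ]
      simp only
      rw [hgzero t (by linarith)]
      simp
  refine ⟨σ, ?_, hσnn, ?_, ?_, ?_⟩
  · -- monotone
    intro s hs t ht hst
    simp only [Set.mem_Ici] at hs ht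
    by_cases h2 : 2 ≤ s
    · have hlogs : 0 ≤ Real.log s := Real.log_nonneg (by linarith)
      have hglesgt := hgmono s t hst
      have hloglog : Real.log s ≤ Real.log t := Real.log_le_log (by linarith) hst
      calc σ s = (g s : ℝ) * Real.log s := rfl
        _ ≤ (g t : ℝ) * Real.log t := by
            apply mul_le_mul (by exact_mod_cast hglesgt) hloglog hlogs (by positivity)
        _ = σ t := rfl
    · have : σ s = 0 := by
        show (g s : ℝ) * Real.log s = 0
        rw [hgzero s (by linarith)]; simp
      rw [this]
      exact hσnn t ht
  · -- big O
    rw [isBigO_iff]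
    refine ⟨4, ?_⟩
    filter_upwards [eventually_ge_atTop (T 1)] with t ht
    have hT1 : (4 : ℝ) ≤ T 1 := by
      have h := hTdouble 0
      rw [hT0] at h
      norm_num at h
      linarith
    have ht2 : (2 : ℝ) ≤ t := by linarith
    have hg1 : 1 ≤ g t := hgge 1 t ht
    have hgstep : g (2 * t) ≤ g t + 1 := by
      rcases Nat.eq_zero_or_pos (g (2 * t)) with h0 | hpos
      · omega
      · obtain ⟨m, hm⟩ := Nat.exists_eq_succ_of_ne_zero (Nat.pos_iff_ne_zero.mp hpos)
        have h2t : (2 : ℝ) ≤ 2 * t := by linarith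
        have hTle : T (g (2 * t)) ≤ 2 * t := hgT (2 * t) h2t
        rw [hm] at hTle
        have : 2 * T m ≤ 2 * t := le_trans (hTdouble m) hTle
        have : T m ≤ t := by linarith
        have := hgge m t this
        omega
    have hlog2t : Real.log (2 * t) ≤ 2 * Real.log t := by
      rw [Real.log_mul (by norm_num) (by linarith)]
      have h1 : Real.log 2 ≤ Real.log t := Real.log_le_log (by norm_num) ht2
      linarith
    have hlognn : 0 ≤ Real.log t := Real.log_nonneg (by linarith)
    have hlog2tnn : 0 ≤ Real.log (2 * t) := Real.log_nonneg (by linarith)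
    have hσ2t : σ (2 * t) = (g (2 * t) : ℝ) * Real.log (2 * t) := rfl
    rw [Real.norm_of_nonneg (hσnn (2 * t) (by linarith)),
        Real.norm_of_nonneg (hσnn t (by linarith))]
    have hcast : (g (2 * t) : ℝ) ≤ (g t : ℝ) + 1 := by exact_mod_cast hgstep
    have hcast2 : (1 : ℝ) ≤ (g t : ℝ) := by exact_mod_cast hg1
    calc σ (2 * t) = (g (2 * t) : ℝ) * Real.log (2 * t) := rfl
      _ ≤ ((g t : ℝ) + 1) * (2 * Real.log t) := by
          apply mul_le_mul hcast hlog2t hlog2tnn (by linarith)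
      _ ≤ (2 * (g t : ℝ)) * (2 * Real.log t) := by nlinarith
      _ = 4 * σ t := by simp only [hσ]; ring
  · -- log little-o σ
    rw [isLittleO_iff]
    intro c hc
    obtain ⟨N, hN⟩ := exists_nat_ge (1 / c)
    filter_upwards [eventually_ge_atTop (T N)] with t ht
    have ht2 : (2 : ℝ) ≤ t := le_trans (hT2 N) ht
    have hgN : N ≤ g t := hgge N t ht
    have hlognn : 0 ≤ Real.log t := Real.log_nonneg (by linarith)
    have h1 : 1 ≤ c * (g t : ℝ) := by
      have : (N : ℝ) ≤ (g t : ℝ) := by exact_mod_cast hgN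
      have h2 : 1 / c ≤ (g t : ℝ) := le_trans hN this
      rw [div_le_iff₀ hc] at h2
      linarith [mul_comm c (g t : ℝ)]
    rw [Real.norm_of_nonneg hlognn, Real.norm_of_nonneg (hσnn t (by linarith))]
    calc Real.log t = 1 * Real.log t := (one_mul _).symm
      _ ≤ (c * (g t : ℝ)) * Real.log t := mul_le_mul_of_nonneg_right h1 hlognn
      _ = c * σ t := by simp only [hσ]; ring
  · -- σ little-o τ k
    intro k
    rw [isLittleO_iff]
    intro c hc
    obtain ⟨N, hN⟩ := exists_nat_ge (max ((k : ℝ) + 1) (1 / c))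
    have hNk : k + 1 ≤ N := by
      have h1 : ((k : ℝ) + 1) ≤ (N : ℝ) := le_trans (le_max_left _ _) hN
      exact_mod_cast h1
    have hNc : 1 / c ≤ (N : ℝ) := le_trans (le_max_right _ _) hN
    filter_upwards [eventually_ge_atTop (T N)] with t ht
    have ht2 : (2 : ℝ) ≤ t := le_trans (hT2 N) ht
    set n := g t with hn
    have hgN : N ≤ n := hgge N t ht
    have hn1 : 1 ≤ n := by omega
    have hkn : k ≤ n := by omega
    have hTn : T n ≤ t := hgT t ht2
    have hMn : M n ≤ t := by
      obtain ⟨m, hm⟩ := Nat.exists_eq_succ_of_ne_zero (by omega : n ≠ 0)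
      calc M n = M (m + 1) := by rw [hm]
        _ ≤ T (m + 1) := hTM m
        _ = T n := by rw [hm]
        _ ≤ t := hTn
    have hkey : ((n : ℝ) + 1) ^ 2 * Real.log t ≤ τ k t := hMp n t hMn k hkn
    have hlognn : 0 ≤ Real.log t := Real.log_nonneg (by linarith)
    have hτnn : 0 ≤ τ k t := hnn k t (by linarith)
    rw [Real.norm_of_nonneg (hσnn t (by linarith)), Real.norm_of_nonneg hτnn]
    -- σ t = n * log t ≤ c * τ k t
    have hc1 : 1 ≤ c * ((n : ℝ) + 1) := by
      have : (N : ℝ) ≤ (n : ℝ) := by exact_mod_cast hgN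
      have h2 : 1 / c ≤ (n : ℝ) + 1 := by linarith
      rw [div_le_iff₀ hc] at h2
      linarith [mul_comm c ((n : ℝ) + 1)]
    have hnnn : (0 : ℝ) ≤ (n : ℝ) := Nat.cast_nonneg n
    calc σ t = (n : ℝ) * Real.log t := rfl
      _ ≤ (c * ((n : ℝ) + 1) ^ 2) * Real.log t := by
          apply mul_le_mul_of_nonneg_right _ hlognn
          nlinarith
      _ = c * (((n : ℝ) + 1) ^ 2 * Real.log t) := by ring
      _ ≤ c * τ k t := mul_le_mul_of_nonneg_left hkey (le_of_lt hc)
end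

section
/- Define σ: [0,∞) → [0,∞) by σ(t) = 0 for t ∈ [0, t_1) and σ(t) = n log t − Σ_{k=1}^n log t_k for t ∈ [t_n, t_{n+1}), where (t_n) is a sequence of positive reals with t_1 = e, t_{n+1} ≥ 2 t_n, and log t_{n+1} ≥ max_{1≤k≤n} 2^{n+1−k} log t_k for all n. Then σ is increasing, σ(2t) = O(σ(t)), and log t = o(σ(t)) as t → ∞. -/
open Filter Asymptotics

/-!
On `[t n, t (n+1))` the function is `σ x = ∑_{k=1}^n log (x / t k)`, a sum of nonnegative terms;
raising `x` enlarges each term and crossing `t (n+1)` only adds the term `log (x / t (n+1)) ≥ 0`,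
so `σ` is increasing. Since `log t (n+1) ≥ 2 log t n`, the subtracted sum `∑_{k ≤ n} log t k` is at
most `2 log t n`, whence `(n - 2) log x ≤ σ x ≤ n log x`. The index `n` tends to infinity with `x`,
which gives `log x = o(σ x)`, and doubling `x` raises the index by at most one because
`t (n+2) ≥ 2 t (n+1)`, which gives `σ (2x) = O(σ x)`.
-/

section GrowingSequence

variable {t : ℕ → ℝ}

theorem monotoneOn_Ici_one_of_two_mul_le (ht : ∀ n, 0 < t n)
    (hgrow : ∀ n ≥ 1, 2 * t n ≤ t (n + 1)) : MonotoneOn t (Set.Ici 1) :=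
  monotoneOn_nat_Ici_of_le_succ fun n hn => by linarith [ht n, hgrow n hn]

theorem exists_lt_of_two_mul_le (h1 : 0 < t 1) (hgrow : ∀ n ≥ 1, 2 * t n ≤ t (n + 1))
    (x : ℝ) : ∃ m, x < t (m + 1) :=
  ((tendsto_atTop_of_geom_le h1 one_lt_two fun n => hgrow (n + 1) n.succ_pos).eventually_gt_atTop
    x).exists

theorem le_of_apply_le_of_lt_apply_succ (hmono : MonotoneOn t (Set.Ici 1)) {n m : ℕ} {x : ℝ}
    (hn : 1 ≤ n) (hnx : t n ≤ x) (hxm : x < t (m + 1)) : n ≤ m :=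
  Nat.lt_succ_iff.1 (hmono.reflect_lt hn (by simp) (hnx.trans_lt hxm))

theorem exists_le_lt_succ (hbdd : ∀ x, ∃ m, x < t (m + 1)) {x : ℝ} (hx : t 1 ≤ x) :
    ∃ n ≥ 1, t n ≤ x ∧ x < t (n + 1) := by
  classical
  have hex := hbdd x
  have hpos : Nat.find hex ≠ 0 := by simpa [Nat.find_eq_zero] using hx
  refine ⟨Nat.find hex, Nat.one_le_iff_ne_zero.2 hpos, ?_, Nat.find_spec hex⟩
  have := Nat.find_min hex (Nat.sub_one_lt hpos)
  rwa [Nat.sub_one_add_one hpos, not_lt] at this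

theorem sum_Icc_le_two_mul_sub {L : ℕ → ℝ} (h : ∀ n ≥ 1, 2 * L n ≤ L (n + 1)) {n : ℕ}
    (hn : 1 ≤ n) : ∑ k ∈ Finset.Icc 1 n, L k ≤ 2 * L n - L 1 := by
  induction n, hn using Nat.le_induction with
  | base => simp; linarith
  | succ n hn ih =>
    rw [Finset.sum_Icc_succ_top (by omega)]
    linarith [h n hn]

end GrowingSequence

noncomputable def sumLogGap (t : ℕ → ℝ) (n : ℕ) (x : ℝ) : ℝ :=
  ∑ k ∈ Finset.Icc 1 n, (Real.log x - Real.log (t k))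

section SumLogGap

variable {t : ℕ → ℝ} {n m : ℕ} {x : ℝ}

theorem sumLogGap_eq (t : ℕ → ℝ) (n : ℕ) (x : ℝ) :
    sumLogGap t n x = n * Real.log x - ∑ k ∈ Finset.Icc 1 n, Real.log (t k) := by
  simp [sumLogGap, Finset.sum_sub_distrib]

theorem sumLogGap_zero (t : ℕ → ℝ) (x : ℝ) : sumLogGap t 0 x = 0 := by
  simp [sumLogGap]

theorem sumLogGap_le_sumLogGap (ht : ∀ n, 0 < t n) (hmono : MonotoneOn t (Set.Ici 1))
    (hnm : n ≤ m) (hmx : t m ≤ x) : sumLogGap t n x ≤ sumLogGap t m x := by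
  refine Finset.sum_le_sum_of_subset_of_nonneg (Finset.Icc_subset_Icc_right hnm) fun k hk _ => ?_
  obtain ⟨hk1, hkm⟩ := Finset.mem_Icc.1 hk
  have hkx : t k ≤ x := (hmono (Set.mem_Ici.2 hk1) (Set.mem_Ici.2 (hk1.trans hkm)) hkm).trans hmx
  exact sub_nonneg.2 (Real.log_le_log (ht k) hkx)

theorem sumLogGap_nonneg (ht : ∀ n, 0 < t n) (hmono : MonotoneOn t (Set.Ici 1))
    (hnx : t n ≤ x) : 0 ≤ sumLogGap t n x :=
  sumLogGap_zero t x ▸ sumLogGap_le_sumLogGap ht hmono n.zero_le hnx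

theorem sumLogGap_mono {a b : ℝ} (ha : 0 < a) (hab : a ≤ b) :
    sumLogGap t n a ≤ sumLogGap t n b :=
  Finset.sum_le_sum fun _ _ => sub_le_sub_right (Real.log_le_log ha hab) _

theorem sumLogGap_le (hlog : ∀ k ≥ 1, 0 ≤ Real.log (t k)) :
    sumLogGap t n x ≤ n * Real.log x := by
  rw [sumLogGap_eq, sub_le_self_iff]
  exact Finset.sum_nonneg fun k hk => hlog k (Finset.mem_Icc.1 hk).1

theorem sub_two_mul_log_le_sumLogGap (ht : ∀ n, 0 < t n) (hlog1 : 0 ≤ Real.log (t 1))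
    (hlog2 : ∀ n ≥ 1, 2 * Real.log (t n) ≤ Real.log (t (n + 1))) (hn : 1 ≤ n) (hnx : t n ≤ x) :
    (n - 2) * Real.log x ≤ sumLogGap t n x := by
  rw [sumLogGap_eq]
  linarith [sum_Icc_le_two_mul_sub hlog2 hn, Real.log_le_log (ht n) hnx]

end SumLogGap

def IsPiecewiseLog (t : ℕ → ℝ) (σ : ℝ → ℝ) : Prop :=
  ∀ n ≥ 1, ∀ x, t n ≤ x → x < t (n + 1) →
    σ x = n * Real.log x - ∑ k ∈ Finset.Icc 1 n, Real.log (t k)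

namespace IsPiecewiseLog

variable {t : ℕ → ℝ} {σ : ℝ → ℝ}

theorem exists_eq_sumLogGap (hσ : IsPiecewiseLog t σ) (hbdd : ∀ x, ∃ m, x < t (m + 1))
    {x : ℝ} (hx : t 1 ≤ x) : ∃ n ≥ 1, t n ≤ x ∧ x < t (n + 1) ∧ σ x = sumLogGap t n x := by
  obtain ⟨n, hn, hnx, hxn⟩ := exists_le_lt_succ hbdd hx
  exact ⟨n, hn, hnx, hxn, by rw [hσ n hn x hnx hxn, sumLogGap_eq]⟩

theorem monotoneOn (hσ : IsPiecewiseLog t σ) (ht : ∀ n, 0 < t n)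
    (hmono : MonotoneOn t (Set.Ici 1)) (hbdd : ∀ x, ∃ m, x < t (m + 1))
    (hσ0 : ∀ x, 0 ≤ x → x < t 1 → σ x = 0) : MonotoneOn σ (Set.Ici 0) := by
  intro a ha b hb hab
  rcases lt_or_ge a (t 1) with ha1 | ha1
  · rw [hσ0 a ha ha1]
    rcases lt_or_ge b (t 1) with hb1 | hb1
    · rw [hσ0 b hb hb1]
    · obtain ⟨m, -, hmb, -, hσb⟩ := hσ.exists_eq_sumLogGap hbdd hb1
      exact hσb ▸ sumLogGap_nonneg ht hmono hmb
  obtain ⟨n, hn, hna, -, hσa⟩ := hσ.exists_eq_sumLogGap hbdd ha1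
  obtain ⟨m, -, hmb, hbm, hσb⟩ := hσ.exists_eq_sumLogGap hbdd (ha1.trans hab)
  have hnm : n ≤ m := le_of_apply_le_of_lt_apply_succ hmono hn (hna.trans hab) hbm
  calc σ a = sumLogGap t n a := hσa
    _ ≤ sumLogGap t n b := sumLogGap_mono ((ht n).trans_le hna) hab
    _ ≤ sumLogGap t m b := sumLogGap_le_sumLogGap ht hmono hnm hmb
    _ = σ b := hσb.symm

theorem isBigO_comp_two_mul (hσ : IsPiecewiseLog t σ) (ht : ∀ n, 0 < t n) (h2 : 2 ≤ t 1)
    (hmono : MonotoneOn t (Set.Ici 1)) (hbdd : ∀ x, ∃ m, x < t (m + 1))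
    (hgrow : ∀ n ≥ 1, 2 * t n ≤ t (n + 1))
    (hlog2 : ∀ n ≥ 1, 2 * Real.log (t n) ≤ Real.log (t (n + 1))) :
    (fun x => σ (2 * x)) =O[atTop] σ := by
  have hlog : ∀ k ≥ 1, 0 ≤ Real.log (t k) := fun k hk =>
    Real.log_nonneg (by linarith [hmono Set.self_mem_Ici (Set.mem_Ici.2 hk) hk])
  refine IsBigO.of_bound 8 ((eventually_ge_atTop (t 3)).mono fun x hx => ?_)
  have hx1 : t 1 ≤ x := (hmono Set.self_mem_Ici (by simp) (by norm_num)).trans hx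
  obtain ⟨n, hn, hnx, hxn, hσx⟩ := hσ.exists_eq_sumLogGap hbdd hx1
  obtain ⟨m, hm, hmx, -, hσ2x⟩ := hσ.exists_eq_sumLogGap hbdd (show t 1 ≤ 2 * x by linarith)
  have hn3 : (3 : ℝ) ≤ n := by
    exact_mod_cast le_of_apply_le_of_lt_apply_succ hmono (by norm_num) hx hxn
  have hmn : (m : ℝ) ≤ n + 1 := by
    have : 2 * x < t (n + 1 + 1) := by linarith [hgrow (n + 1) (by omega)]
    exact_mod_cast le_of_apply_le_of_lt_apply_succ hmono hm hmx this
  have hlogx : Real.log 2 ≤ Real.log x := Real.log_le_log two_pos (h2.trans hx1)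
  have hlog2x : Real.log (2 * x) = Real.log 2 + Real.log x :=
    Real.log_mul two_ne_zero (by linarith)
  have hlog2pos : 0 < Real.log 2 := Real.log_pos one_lt_two
  rw [Real.norm_of_nonneg (hσ2x ▸ sumLogGap_nonneg ht hmono hmx),
    Real.norm_of_nonneg (hσx ▸ sumLogGap_nonneg ht hmono hnx)]
  calc σ (2 * x) ≤ m * Real.log (2 * x) := hσ2x ▸ sumLogGap_le hlog
    _ ≤ (n + 1) * (2 * Real.log x) := by rw [hlog2x]; gcongr <;> linarith
    _ ≤ 8 * ((n - 2) * Real.log x) := by nlinarith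
    _ ≤ 8 * σ x := by
      rw [hσx]
      gcongr
      exact sub_two_mul_log_le_sumLogGap ht (hlog 1 le_rfl) hlog2 hn hnx

theorem isLittleO_log (hσ : IsPiecewiseLog t σ) (ht : ∀ n, 0 < t n) (h1 : 1 ≤ t 1)
    (hmono : MonotoneOn t (Set.Ici 1)) (hbdd : ∀ x, ∃ m, x < t (m + 1))
    (hlog2 : ∀ n ≥ 1, 2 * Real.log (t n) ≤ Real.log (t (n + 1))) :
    (fun x => Real.log x) =o[atTop] σ := by
  refine isLittleO_iff.2 fun ε hε => ?_
  obtain ⟨N, hN⟩ := exists_nat_gt (ε⁻¹ + 2)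
  have hN1 : 1 ≤ N := by exact_mod_cast (show (1 : ℝ) ≤ N by linarith [inv_pos.2 hε])
  filter_upwards [eventually_ge_atTop (t N)] with x hx
  have hx1 : t 1 ≤ x := (hmono Set.self_mem_Ici (Set.mem_Ici.2 hN1) hN1).trans hx
  obtain ⟨n, hn, hnx, hxn, hσx⟩ := hσ.exists_eq_sumLogGap hbdd hx1
  have hNn : (N : ℝ) ≤ n := by exact_mod_cast le_of_apply_le_of_lt_apply_succ hmono hN1 hx hxn
  have hlogx : 0 ≤ Real.log x := Real.log_nonneg (h1.trans hx1)
  have hσx_ge : ε⁻¹ * Real.log x ≤ σ x :=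
    calc ε⁻¹ * Real.log x ≤ (n - 2) * Real.log x := by gcongr; linarith
      _ ≤ σ x := hσx ▸ sub_two_mul_log_le_sumLogGap ht (Real.log_nonneg h1) hlog2 hn hnx
  rw [Real.norm_of_nonneg hlogx, Real.norm_of_nonneg (hσx ▸ sumLogGap_nonneg ht hmono hnx)]
  calc Real.log x = ε * (ε⁻¹ * Real.log x) := by field_simp
    _ ≤ ε * σ x := by gcongr

end IsPiecewiseLog

/-- The explicit piecewise-logarithmic construction from a rapidly growing
sequence `(t_n)` yields a weight function: increasing with σ(2t) = O(σ(t)) and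
log t = o(σ(t)). -/
theorem stmt4 (t : ℕ → ℝ) (ht : ∀ n, 0 < t n) (h1 : t 1 = Real.exp 1)
    (hgrow : ∀ n ≥ 1, 2 * t n ≤ t (n + 1))
    (hlog : ∀ n ≥ 1, ∀ k, 1 ≤ k → k ≤ n →
      (2 : ℝ) ^ (n + 1 - k) * Real.log (t k) ≤ Real.log (t (n + 1)))
    (σ : ℝ → ℝ)
    (hσ0 : ∀ x, 0 ≤ x → x < t 1 → σ x = 0)
    (hσn : ∀ n ≥ 1, ∀ x, t n ≤ x → x < t (n + 1) →
      σ x = n * Real.log x - ∑ k ∈ Finset.Icc 1 n, Real.log (t k)) :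
    MonotoneOn σ (Set.Ici 0) ∧ (fun x => σ (2 * x)) =O[atTop] σ ∧
      (fun x => Real.log x) =o[atTop] σ := by
  have h2 : 2 ≤ t 1 := by linarith [h1 ▸ Real.add_one_le_exp (1 : ℝ)]
  have hmono := monotoneOn_Ici_one_of_two_mul_le ht hgrow
  have hbdd := exists_lt_of_two_mul_le (ht 1) hgrow
  have hlog2 : ∀ n ≥ 1, 2 * Real.log (t n) ≤ Real.log (t (n + 1)) := fun n hn => by
    simpa using hlog n hn n hn le_rfl
  have hσ : IsPiecewiseLog t σ := hσn
  exact ⟨hσ.monotoneOn ht hmono hbdd hσ0, hσ.isBigO_comp_two_mul ht h2 hmono hbdd hgrow hlog2,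
    hσ.isLittleO_log ht (by linarith) hmono hbdd hlog2⟩
end

section
/- Let σ be a weight function. Then there exist an entire function Q on ℂ and a constant a ∈ (0,1] such that for every n ∈ ℕ: inf_{|Im z| ≤ n} e^{−aσ(|Re z|)} |Q(z)| > 0 and sup_{|Im z| ≤ n} e^{−σ(|Re z|)} |Q(z)| < ∞. -/
/-!
If `σ(2t) ≤ K σ(t)` for large `t`, put `d k = σ(2^(k+1)) - σ(2^k)` and
`g z = ∑ d k * (1 - exp (-(z / 2^k)^N))` with `N` even and `2^N ≥ 2K`. When `|Im z|` is small
compared with `|Re z|`, the numbers `(z / 2^k)^N` have real part `≥ 0`, so every term has real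
part in `[0, 2 d k]`, and at least `d k / 2` once `2^(k+1) ≤ |Re z|`. These lower terms telescope
to about `σ(|Re z|)`; the terms with `2^k` beyond `|z|` decay geometrically because `2^N` beats
the growth `K^k` of `d k`. So `Re g ≍ σ(|Re z|)` far out in every horizontal strip, compactness
handles the rest of the strip, and `Q = exp (g / A)` for a constant `A`.
-/

open Filter Asymptotics

def IsWeightFunction (σ : ℝ → ℝ) : Prop :=
  MonotoneOn σ (Set.Ici 0) ∧ (∀ t, 0 ≤ t → 0 ≤ σ t) ∧
    (fun t => σ (2 * t)) =O[atTop] σ ∧ (fun t => Real.log t) =o[atTop] σ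

open Complex Finset

theorem norm_pow_sub_pow_le {R : Type*} [NormedCommRing R] [NormOneClass R] (a b : R) (n : ℕ) :
    ‖a ^ n - b ^ n‖ ≤ ‖a - b‖ * n * max ‖a‖ ‖b‖ ^ (n - 1) := by
  rw [← geom_sum₂_mul, mul_comm, mul_assoc]
  refine (norm_mul_le _ _).trans (mul_le_mul_of_nonneg_left ?_ (norm_nonneg _))
  refine (norm_sum_le _ _).trans ?_
  calc ∑ i ∈ range n, ‖a ^ i * b ^ (n - 1 - i)‖
      ≤ ∑ i ∈ range n, max ‖a‖ ‖b‖ ^ (n - 1) := by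
        gcongr with i hi
        have hin : i + (n - 1 - i) = n - 1 := by have := mem_range.1 hi; omega
        calc ‖a ^ i * b ^ (n - 1 - i)‖ ≤ ‖a‖ ^ i * ‖b‖ ^ (n - 1 - i) :=
              (norm_mul_le _ _).trans (mul_le_mul (norm_pow_le _ _) (norm_pow_le _ _)
                (norm_nonneg _) (by positivity))
          _ ≤ max ‖a‖ ‖b‖ ^ i * max ‖a‖ ‖b‖ ^ (n - 1 - i) := by gcongr <;> simp
          _ = max ‖a‖ ‖b‖ ^ (n - 1) := by rw [← pow_add, hin]
    _ = n * max ‖a‖ ‖b‖ ^ (n - 1) := by simp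

theorem norm_sub_ofReal_re (z : ℂ) : ‖z - z.re‖ = |z.im| := by
  have : z - z.re = z.im * I := by apply Complex.ext <;> simp
  rw [this, norm_mul, norm_I, mul_one, norm_real, Real.norm_eq_abs]

theorem norm_le_two_mul_abs_re {N : ℕ} (hN : 0 < N) {z : ℂ}
    (hz : N * 2 ^ N * |z.im| ≤ |z.re|) : ‖z‖ ≤ 2 * |z.re| := by
  have hNx : 1 ≤ (N : ℝ) * 2 ^ N :=
    one_le_mul_of_one_le_of_one_le (by exact_mod_cast hN) (one_le_pow₀ one_le_two)
  linarith [norm_le_abs_re_add_abs_im z, le_mul_of_one_le_left (abs_nonneg z.im) hNx]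

theorem half_abs_re_pow_le_re_pow {N : ℕ} (hN : Even N) {z : ℂ}
    (hz : N * 2 ^ N * |z.im| ≤ |z.re|) : |z.re| ^ N / 2 ≤ (z ^ N).re := by
  rcases Nat.eq_zero_or_pos N with rfl | hN0
  · norm_num
  set x := |z.re|
  have hmax : max ‖z‖ ‖(z.re : ℂ)‖ ≤ 2 * x := by
    rw [norm_real, Real.norm_eq_abs]
    exact max_le (norm_le_two_mul_abs_re hN0 hz) (by linarith [abs_nonneg z.re])
  have hdiff : ‖z ^ N - (z.re : ℂ) ^ N‖ ≤ x ^ N / 2 :=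
    calc ‖z ^ N - (z.re : ℂ) ^ N‖ ≤ |z.im| * N * (2 * x) ^ (N - 1) := by
          rw [← norm_sub_ofReal_re]; exact (norm_pow_sub_pow_le _ _ _).trans (by gcongr)
      _ = N * 2 ^ N * |z.im| * x ^ (N - 1) / 2 := by
          rw [mul_pow, ← pow_sub_one_mul hN0.ne' (2 : ℝ)]; ring
      _ ≤ x * x ^ (N - 1) / 2 := by gcongr
      _ = x ^ N / 2 := by rw [← pow_succ', Nat.sub_add_cancel hN0]
  have hre : ((z.re : ℂ) ^ N).re = x ^ N := by
    rw [← ofReal_pow, ofReal_re, hN.pow_abs]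
  have := (abs_le.1 ((abs_re_le_norm _).trans hdiff)).1
  rw [sub_re, hre] at this
  linarith

theorem norm_one_sub_exp_neg_le (u : ℂ) : ‖1 - exp (-u)‖ ≤ ‖u‖ * Real.exp ‖u‖ := by
  simpa [norm_sub_rev] using norm_exp_sub_sum_le_norm_mul_exp (-u) 1

theorem re_one_sub_exp_neg (u : ℂ) :
    (1 - exp (-u)).re = 1 - Real.exp (-u.re) * Real.cos u.im := by
  simp [exp_re]

theorem re_one_sub_exp_neg_nonneg {u : ℂ} (hu : 0 ≤ u.re) : 0 ≤ (1 - exp (-u)).re := by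
  rw [re_one_sub_exp_neg]
  have : Real.exp (-u.re) ≤ 1 := Real.exp_le_one_iff.2 (by linarith)
  nlinarith [Real.exp_pos (-u.re), Real.cos_le_one u.im, Real.neg_one_le_cos u.im]

theorem re_one_sub_exp_neg_le_two {u : ℂ} (hu : 0 ≤ u.re) : (1 - exp (-u)).re ≤ 2 := by
  rw [re_one_sub_exp_neg]
  have : Real.exp (-u.re) ≤ 1 := Real.exp_le_one_iff.2 (by linarith)
  nlinarith [Real.exp_pos (-u.re), Real.cos_le_one u.im, Real.neg_one_le_cos u.im]

theorem half_le_re_one_sub_exp_neg {u : ℂ} (hu : 1 ≤ u.re) : 1 / 2 ≤ (1 - exp (-u)).re := by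
  rw [re_one_sub_exp_neg]
  have h2 : 2 ≤ Real.exp 1 := by linarith [Real.add_one_le_exp 1]
  have : Real.exp (-u.re) ≤ 1 / 2 := by
    calc Real.exp (-u.re) ≤ Real.exp (-1) := Real.exp_le_exp.2 (by linarith)
      _ ≤ 1 / 2 := by rw [Real.exp_neg, inv_eq_one_div]; gcongr
  nlinarith [Real.exp_pos (-u.re), Real.cos_le_one u.im, Real.neg_one_le_cos u.im]

noncomputable def dyadicTerm (d : ℕ → ℝ) (N k : ℕ) (z : ℂ) : ℂ :=
  d k * (1 - exp (-(z / 2 ^ k) ^ N))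

noncomputable def dyadicSeries (d : ℕ → ℝ) (N : ℕ) (z : ℂ) : ℂ := ∑' k, dyadicTerm d N k z

section DyadicSeries

variable {d : ℕ → ℝ} {N : ℕ}

theorem norm_div_two_pow_pow (z : ℂ) (k : ℕ) :
    ‖(z / 2 ^ k) ^ N‖ = ‖z‖ ^ N / (2 ^ N) ^ k := by
  rw [norm_pow, norm_div, norm_pow, RCLike.norm_ofNat, div_pow, ← pow_mul, ← pow_mul, mul_comm]

theorem re_div_two_pow_pow (z : ℂ) (k : ℕ) :
    ((z / 2 ^ k) ^ N).re = (z ^ N).re / (2 ^ N) ^ k := by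
  rw [div_pow, ← pow_mul, mul_comm, pow_mul]
  exact_mod_cast div_ofReal_re (z ^ N) ((2 ^ N) ^ k)

theorem norm_dyadicTerm_le {R : ℝ} {z : ℂ} (hz : ‖z‖ ≤ R) (k : ℕ) :
    ‖dyadicTerm d N k z‖ ≤ |d k| / (2 ^ N) ^ k * (R ^ N * Real.exp (R ^ N)) := by
  have hu : ‖(z / 2 ^ k) ^ N‖ ≤ R ^ N / (2 ^ N) ^ k := by
    rw [norm_div_two_pow_pow]; gcongr
  have hR : 0 ≤ R := (norm_nonneg z).trans hz
  have hu' : ‖(z / 2 ^ k) ^ N‖ ≤ R ^ N :=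
    hu.trans (div_le_self (by positivity) (one_le_pow₀ (one_le_pow₀ one_le_two)))
  rw [dyadicTerm, norm_mul, norm_real, Real.norm_eq_abs]
  calc |d k| * ‖1 - exp (-(z / 2 ^ k) ^ N)‖
      ≤ |d k| * (R ^ N / (2 ^ N) ^ k * Real.exp (R ^ N)) := by
        gcongr
        exact (norm_one_sub_exp_neg_le _).trans (by gcongr)
    _ = _ := by ring

theorem norm_dyadicTerm_add_le {m : ℕ} {z : ℂ} (hz : ‖z‖ ≤ 2 ^ m) (i : ℕ) :
    ‖dyadicTerm d N (i + m) z‖ ≤ 2 * |d (i + m)| / (2 ^ N) ^ i := by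
  have hu : ‖(z / 2 ^ (i + m)) ^ N‖ ≤ 1 / (2 ^ N) ^ i := by
    calc ‖(z / 2 ^ (i + m)) ^ N‖ ≤ ((2 : ℝ) ^ N) ^ m / (2 ^ N) ^ (i + m) := by
          rw [norm_div_two_pow_pow, pow_right_comm (2 : ℝ) N m]; gcongr
      _ = 1 / (2 ^ N) ^ i := by rw [pow_add]; field_simp
  rw [dyadicTerm, norm_mul, norm_real, Real.norm_eq_abs, ← neg_sub, norm_neg]
  calc |d (i + m)| * ‖exp (-(z / 2 ^ (i + m)) ^ N) - 1‖
      ≤ |d (i + m)| * (2 * (1 / (2 ^ N) ^ i)) := by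
        gcongr
        refine (norm_exp_sub_one_le ?_).trans ?_ <;> rw [norm_neg]
        · exact hu.trans (div_le_one_of_le₀ (one_le_pow₀ (one_le_pow₀ one_le_two)) (by positivity))
        · gcongr
    _ = _ := by ring

theorem re_dyadicTerm (k : ℕ) (z : ℂ) :
    (dyadicTerm d N k z).re = d k * (1 - exp (-(z / 2 ^ k) ^ N)).re :=
  re_ofReal_mul _ _

theorem re_dyadicTerm_nonneg {k : ℕ} {z : ℂ} (hd : 0 ≤ d k) (hz : 0 ≤ (z ^ N).re) :
    0 ≤ (dyadicTerm d N k z).re := by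
  rw [re_dyadicTerm]
  exact mul_nonneg hd (re_one_sub_exp_neg_nonneg (by rw [re_div_two_pow_pow]; positivity))

theorem re_dyadicTerm_le {k : ℕ} {z : ℂ} (hd : 0 ≤ d k) (hz : 0 ≤ (z ^ N).re) :
    (dyadicTerm d N k z).re ≤ 2 * d k := by
  rw [re_dyadicTerm, mul_comm 2]
  exact mul_le_mul_of_nonneg_left
    (re_one_sub_exp_neg_le_two (by rw [re_div_two_pow_pow]; positivity)) hd

theorem half_le_re_dyadicTerm {k : ℕ} {z : ℂ} (hd : 0 ≤ d k) (hz : (2 ^ N) ^ k ≤ (z ^ N).re) :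
    d k / 2 ≤ (dyadicTerm d N k z).re := by
  rw [re_dyadicTerm, div_eq_mul_one_div]
  refine mul_le_mul_of_nonneg_left (half_le_re_one_sub_exp_neg ?_) hd
  rw [re_div_two_pow_pow, one_le_div (by positivity)]
  exact hz

theorem summable_dyadicTerm (hd : Summable fun k => |d k| / (2 ^ N) ^ k) (z : ℂ) :
    Summable fun k => dyadicTerm d N k z :=
  Summable.of_norm_bounded (hd.mul_right _) (norm_dyadicTerm_le le_rfl)

theorem hasSum_re_dyadicTerm (hd : Summable fun k => |d k| / (2 ^ N) ^ k) (z : ℂ) :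
    HasSum (fun k => (dyadicTerm d N k z).re) (dyadicSeries d N z).re :=
  hasSum_re (summable_dyadicTerm hd z).hasSum

theorem differentiable_dyadicSeries (hd : Summable fun k => |d k| / (2 ^ N) ^ k) :
    Differentiable ℂ (dyadicSeries d N) := by
  intro z
  have hball : DifferentiableOn ℂ (dyadicSeries d N) (Metric.ball 0 (‖z‖ + 1)) :=
    differentiableOn_tsum_of_summable_norm (hd.mul_right _)
      (fun k => by fun_prop [dyadicTerm]) Metric.isOpen_ball
      (fun k w hw => norm_dyadicTerm_le (mem_ball_zero_iff.1 hw).le k)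
  exact hball.differentiableAt (Metric.isOpen_ball.mem_nhds (by simp))

end DyadicSeries

structure DoublingWeight (σ : ℝ → ℝ) (K T : ℝ) : Prop where
  monotoneOn : MonotoneOn σ (Set.Ici 0)
  nonneg : ∀ t, 0 ≤ t → 0 ≤ σ t
  one_le_K : 1 ≤ K
  one_le_T : 1 ≤ T
  doubling : ∀ t, T ≤ t → σ (2 * t) ≤ K * σ t

theorem IsWeightFunction.exists_doublingWeight {σ : ℝ → ℝ} (hσ : IsWeightFunction σ) :
    ∃ K T, DoublingWeight σ K T := by
  obtain ⟨hmono, hnn, hO, -⟩ := hσ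
  obtain ⟨c, hc⟩ := hO.bound
  obtain ⟨T, hT⟩ := eventually_atTop.1 hc
  refine ⟨max c 1, max T 1, hmono, hnn, le_max_right _ _, le_max_right _ _, fun t ht => ?_⟩
  have ht0 : 0 ≤ t := zero_le_one.trans ((le_max_right _ _).trans ht)
  have h := hT t ((le_max_left _ _).trans ht)
  rw [Real.norm_eq_abs, Real.norm_eq_abs, abs_of_nonneg (hnn t ht0)] at h
  calc σ (2 * t) ≤ c * σ t := (le_abs_self _).trans h
    _ ≤ max c 1 * σ t := by gcongr; exacts [hnn t ht0, le_max_left _ _]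

def dyadicIncrement (σ : ℝ → ℝ) (k : ℕ) : ℝ := σ (2 ^ (k + 1)) - σ (2 ^ k)

theorem sum_range_dyadicIncrement (σ : ℝ → ℝ) (n : ℕ) :
    ∑ k ∈ range n, dyadicIncrement σ k = σ (2 ^ n) - σ 1 := by
  simpa only [dyadicIncrement, pow_zero] using sum_range_sub (fun k => σ (2 ^ k)) n

namespace DoublingWeight

variable {σ : ℝ → ℝ} {K T : ℝ}

theorem mono (hσ : DoublingWeight σ K T) {s t : ℝ} (hs : 0 ≤ s) (hst : s ≤ t) : σ s ≤ σ t :=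
  hσ.monotoneOn hs (hs.trans hst) hst

theorem le_pow_mul (hσ : DoublingWeight σ K T) {t : ℝ} (ht : T ≤ t) (i : ℕ) :
    σ (2 ^ i * t) ≤ K ^ i * σ t := by
  have ht0 : 0 ≤ t := by linarith [hσ.one_le_T]
  induction i with
  | zero => simp
  | succ i ih =>
    calc σ (2 ^ (i + 1) * t) = σ (2 * (2 ^ i * t)) := by ring_nf
      _ ≤ K * σ (2 ^ i * t) :=
        hσ.doubling _ (ht.trans (le_mul_of_one_le_left ht0 (one_le_pow₀ one_le_two)))
      _ ≤ K * (K ^ i * σ t) := by gcongr; linarith [hσ.one_le_K]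
      _ = K ^ (i + 1) * σ t := by ring

theorem dyadicIncrement_nonneg (hσ : DoublingWeight σ K T) (k : ℕ) :
    0 ≤ dyadicIncrement σ k :=
  sub_nonneg.2 (hσ.mono (by positivity) (pow_le_pow_right₀ one_le_two k.le_succ))

theorem dyadicIncrement_le (hσ : DoublingWeight σ K T) (k : ℕ) :
    dyadicIncrement σ k ≤ σ (2 ^ (k + 1)) :=
  sub_le_self _ (hσ.nonneg _ (by positivity))

theorem dyadicIncrement_add_le (hσ : DoublingWeight σ K T) {m : ℕ} (hm : T ≤ 2 ^ m) (i : ℕ) :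
    dyadicIncrement σ (i + m) ≤ K ^ (i + 1) * σ (2 ^ m) :=
  calc dyadicIncrement σ (i + m) ≤ σ (2 ^ (i + 1) * 2 ^ m) := by
        rw [← pow_add, add_right_comm]; exact hσ.dyadicIncrement_le _
    _ ≤ K ^ (i + 1) * σ (2 ^ m) := hσ.le_pow_mul hm _

theorem summable_dyadicIncrement_div {N : ℕ} (hσ : DoublingWeight σ K T) (hKN : K < 2 ^ N) :
    Summable fun k => |dyadicIncrement σ k| / (2 ^ N) ^ k := by
  have hK0 : 0 < K := by linarith [hσ.one_le_K]
  refine Summable.of_nonneg_of_le (fun k => by positivity) (fun k => ?_)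
    ((summable_geometric_of_lt_one (by positivity) ((div_lt_one (by positivity)).2 hKN)).mul_left
      (K * σ T))
  rw [abs_of_nonneg (hσ.dyadicIncrement_nonneg k), div_pow, ← mul_div_assoc]
  have hT0 : 0 ≤ T := by linarith [hσ.one_le_T]
  gcongr
  calc dyadicIncrement σ k ≤ σ (2 ^ (k + 1) * T) :=
        (hσ.dyadicIncrement_le k).trans
          (hσ.mono (by positivity) (le_mul_of_one_le_right (by positivity) hσ.one_le_T))
    _ ≤ K ^ (k + 1) * σ T := hσ.le_pow_mul le_rfl _
    _ = K * σ T * K ^ k := by ring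

theorem norm_dyadicTerm_add_le_geometric (hσ : DoublingWeight σ K T) {N m : ℕ}
    (hKN : 2 * K ≤ 2 ^ N) (hm : T ≤ 2 ^ m) {z : ℂ} (hz : ‖z‖ ≤ 2 ^ m) (i : ℕ) :
    ‖dyadicTerm (dyadicIncrement σ) N (i + m) z‖ ≤ 2 * K * σ (2 ^ m) * (1 / 2) ^ i := by
  have hK0 : 0 ≤ K := by linarith [hσ.one_le_K]
  have hKN' : K / 2 ^ N ≤ 1 / 2 := by
    rw [div_le_iff₀ (by positivity)]; linarith
  calc ‖dyadicTerm (dyadicIncrement σ) N (i + m) z‖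
      ≤ 2 * |dyadicIncrement σ (i + m)| / (2 ^ N) ^ i := norm_dyadicTerm_add_le hz i
    _ ≤ 2 * (K ^ (i + 1) * σ (2 ^ m)) / (2 ^ N) ^ i := by
        rw [abs_of_nonneg (hσ.dyadicIncrement_nonneg _)]
        gcongr
        exact hσ.dyadicIncrement_add_le hm i
    _ = 2 * K * σ (2 ^ m) * (K / 2 ^ N) ^ i := by rw [div_pow]; ring
    _ ≤ 2 * K * σ (2 ^ m) * (1 / 2) ^ i := by
        have := hσ.nonneg (2 ^ m) (by positivity)
        gcongr

theorem exists_dyadic_scale (hσ : DoublingWeight σ K T) {x : ℝ} (hx : 2 * T ≤ x) :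
    ∃ j : ℕ, T ≤ 2 ^ j ∧ 2 ^ j ≤ x ∧ x < 2 ^ (j + 1) := by
  obtain ⟨j, hjx, hxj⟩ := exists_nat_pow_near (by linarith [hσ.one_le_T] : 1 ≤ x) one_lt_two
  exact ⟨j, by rw [pow_succ] at hxj; linarith, hjx, hxj⟩

theorem re_dyadicSeries_ge (hσ : DoublingWeight σ K T) {N : ℕ} (hN : Even N)
    (hKN : 2 * K ≤ 2 ^ N) {z : ℂ} (hz : N * 2 ^ N * |z.im| ≤ |z.re|) (hx : 2 * T ≤ |z.re|) :
    σ |z.re| / (2 * K) - σ 1 / 2 ≤ (dyadicSeries (dyadicIncrement σ) N z).re := by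
  set x := |z.re|
  have hK := hσ.one_le_K
  have hreN := half_abs_re_pow_le_re_pow hN hz
  obtain ⟨j, hTj, hjx, hxj⟩ := hσ.exists_dyadic_scale hx
  have hsum := hasSum_re_dyadicTerm (hσ.summable_dyadicIncrement_div (N := N) (by linarith)) z
  have hhalf : ∀ k ∈ range j,
      dyadicIncrement σ k / 2 ≤ (dyadicTerm (dyadicIncrement σ) N k z).re := by
    intro k hk
    refine half_le_re_dyadicTerm (hσ.dyadicIncrement_nonneg k) (le_trans ?_ hreN)
    have hkj : k + 1 ≤ j := mem_range.1 hk
    calc ((2 : ℝ) ^ N) ^ k = ((2 : ℝ) ^ N) ^ (k + 1) / 2 ^ N := by rw [pow_succ]; field_simp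
      _ ≤ ((2 : ℝ) ^ N) ^ j / 2 := by gcongr; exacts [one_le_pow₀ one_le_two, by linarith]
      _ ≤ x ^ N / 2 := by rw [pow_right_comm]; gcongr
  have hσx : σ x ≤ K * σ (2 ^ j) :=
    (hσ.mono (by positivity) hxj.le).trans (by rw [pow_succ']; exact hσ.doubling _ hTj)
  have hσx' : σ x / (2 * K) ≤ σ (2 ^ j) / 2 := by
    rw [div_le_div_iff₀ (by positivity) two_pos]; nlinarith
  calc σ x / (2 * K) - σ 1 / 2 ≤ (σ (2 ^ j) - σ 1) / 2 := by linarith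
    _ = ∑ k ∈ range j, dyadicIncrement σ k / 2 := by rw [← sum_div, sum_range_dyadicIncrement]
    _ ≤ ∑ k ∈ range j, (dyadicTerm (dyadicIncrement σ) N k z).re := sum_le_sum hhalf
    _ ≤ (dyadicSeries (dyadicIncrement σ) N z).re :=
        hsum.summable.sum_le_tsum _
          (fun k _ => re_dyadicTerm_nonneg (hσ.dyadicIncrement_nonneg k)
            ((by positivity : (0 : ℝ) ≤ x ^ N / 2).trans hreN))
        |>.trans_eq hsum.tsum_eq

theorem re_dyadicSeries_le (hσ : DoublingWeight σ K T) {N : ℕ} (hN : Even N)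
    (hKN : 2 * K ≤ 2 ^ N) {z : ℂ} (hz : N * 2 ^ N * |z.im| ≤ |z.re|) (hx : 2 * T ≤ |z.re|) :
    (dyadicSeries (dyadicIncrement σ) N z).re ≤ 6 * K ^ 3 * σ |z.re| := by
  set x := |z.re|
  have hK := hσ.one_le_K
  have hN0 : 0 < N := Nat.pos_of_ne_zero fun h => by subst h; norm_num at hKN; linarith
  have hreN : 0 ≤ (z ^ N).re := (by positivity : (0 : ℝ) ≤ x ^ N / 2).trans
    (half_abs_re_pow_le_re_pow hN hz)
  obtain ⟨j, hTj, hjx, hxj⟩ := hσ.exists_dyadic_scale hx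
  set m := j + 2
  have hTm : T ≤ 2 ^ m := hTj.trans (pow_le_pow_right₀ one_le_two (by omega))
  have hzm : ‖z‖ ≤ 2 ^ m := by
    have := norm_le_two_mul_abs_re hN0 hz
    rw [pow_succ']; linarith
  have hσm : σ (2 ^ m) ≤ K ^ 2 * σ x := by
    calc σ (2 ^ m) = σ (2 ^ 2 * 2 ^ j) := by rw [← pow_add, add_comm]
      _ ≤ K ^ 2 * σ (2 ^ j) := hσ.le_pow_mul hTj 2
      _ ≤ K ^ 2 * σ x := by gcongr; exact hσ.mono (by positivity) hjx
  have hσm0 := hσ.nonneg (2 ^ m) (by positivity)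
  have hsum := hasSum_re_dyadicTerm (hσ.summable_dyadicIncrement_div (N := N) (by linarith)) z
  have hhead : ∑ k ∈ range m, (dyadicTerm (dyadicIncrement σ) N k z).re ≤ 2 * σ (2 ^ m) :=
    calc ∑ k ∈ range m, (dyadicTerm (dyadicIncrement σ) N k z).re
        ≤ ∑ k ∈ range m, 2 * dyadicIncrement σ k :=
          sum_le_sum fun k _ => re_dyadicTerm_le (hσ.dyadicIncrement_nonneg k) hreN
      _ ≤ 2 * σ (2 ^ m) := by
          rw [← mul_sum, sum_range_dyadicIncrement]
          linarith [hσ.nonneg 1 zero_le_one]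
  have htail : ∑' i, (dyadicTerm (dyadicIncrement σ) N (i + m) z).re ≤ 4 * K * σ (2 ^ m) :=
    calc ∑' i, (dyadicTerm (dyadicIncrement σ) N (i + m) z).re
        ≤ ∑' i, 2 * K * σ (2 ^ m) * (1 / 2) ^ i :=
          ((summable_nat_add_iff m).2 hsum.summable).tsum_le_tsum
            (fun i => (re_le_norm _).trans (hσ.norm_dyadicTerm_add_le_geometric hKN hTm hzm i))
            (summable_geometric_two.mul_left _)
      _ = 4 * K * σ (2 ^ m) := by rw [tsum_mul_left, tsum_geometric_two]; ring
  calc (dyadicSeries (dyadicIncrement σ) N z).re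
      = ∑ k ∈ range m, (dyadicTerm (dyadicIncrement σ) N k z).re
        + ∑' i, (dyadicTerm (dyadicIncrement σ) N (i + m) z).re :=
        (hsum.summable.sum_add_tsum_nat_add m).trans hsum.tsum_eq |>.symm
    _ ≤ 6 * K * σ (2 ^ m) := by nlinarith
    _ ≤ 6 * K * (K ^ 2 * σ x) := by gcongr
    _ = 6 * K ^ 3 * σ x := by ring

theorem far_bounds_re_dyadicSeries (hσ : DoublingWeight σ K T) {N : ℕ} (hN : Even N)
    (hKN : 2 * K ≤ 2 ^ N) {b : ℝ} {z : ℂ} (hzb : |z.im| ≤ b)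
    (hzR : max (2 * T) (N * 2 ^ N * b) ≤ |z.re|) :
    1 / (12 * K ^ 4) * σ |z.re| - σ 1 ≤
        (dyadicSeries (dyadicIncrement σ) N z).re / (6 * K ^ 3) ∧
      (dyadicSeries (dyadicIncrement σ) N z).re / (6 * K ^ 3) ≤ σ |z.re| + σ 1 := by
  have hK := hσ.one_le_K
  have hx : 2 * T ≤ |z.re| := (le_max_left _ _).trans hzR
  have hz : N * 2 ^ N * |z.im| ≤ |z.re| :=
    (by gcongr : (N : ℝ) * 2 ^ N * |z.im| ≤ N * 2 ^ N * b).trans ((le_max_right _ _).trans hzR)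
  have hlo := hσ.re_dyadicSeries_ge hN hKN hz hx
  have hhi := hσ.re_dyadicSeries_le hN hKN hz hx
  have hσ1 := hσ.nonneg 1 zero_le_one
  have hK3 : 1 ≤ K ^ 3 := one_le_pow₀ hK
  constructor
  · rw [le_div_iff₀ (by positivity)]
    have : 1 / (12 * K ^ 4) * σ |z.re| * (6 * K ^ 3) = σ |z.re| / (2 * K) := by
      field_simp; ring
    nlinarith
  · rw [div_le_iff₀ (by positivity)]
    nlinarith [hσ.nonneg |z.re| (abs_nonneg _)]

end DoublingWeight

theorem exists_bounds_on_strip_of_far {σ : ℝ → ℝ} {h : ℂ → ℝ}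
    (hmono : MonotoneOn σ (Set.Ici 0)) (hh : Continuous h) {a b R C : ℝ} (ha : 0 ≤ a)
    (hfar : ∀ z : ℂ, |z.im| ≤ b → R ≤ |z.re| → a * σ |z.re| - C ≤ h z ∧ h z ≤ σ |z.re| + C) :
    ∃ C', ∀ z : ℂ, |z.im| ≤ b → a * σ |z.re| - C' ≤ h z ∧ h z ≤ σ |z.re| + C' := by
  obtain ⟨M, hM⟩ :=
    (isCompact_closedBall (0 : ℂ) (R + b)).exists_bound_of_continuousOn hh.continuousOn
  refine ⟨max C (M + |a * σ R| + |σ 0|), fun z hz => ?_⟩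
  have hC := le_max_left C (M + |a * σ R| + |σ 0|)
  have hC' := le_max_right C (M + |a * σ R| + |σ 0|)
  by_cases hzR : R ≤ |z.re|
  · obtain ⟨hlo, hhi⟩ := hfar z hz hzR
    constructor <;> linarith
  · push Not at hzR
    have hzM : |h z| ≤ M := by
      simpa using hM z (mem_closedBall_zero_iff.2
        ((norm_le_abs_re_add_abs_im z).trans (by linarith)))
    have hR : 0 ≤ R := (abs_nonneg _).trans hzR.le
    have hσ0 : σ 0 ≤ σ |z.re| :=
      hmono (Set.mem_Ici.2 le_rfl) (abs_nonneg z.re) (abs_nonneg z.re)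
    have hσR : a * σ |z.re| ≤ a * σ R := by
      gcongr; exact hmono (abs_nonneg z.re) hR hzR.le
    obtain ⟨hM₁, hM₂⟩ := abs_le.1 hzM
    constructor <;>
      linarith [le_abs_self (a * σ R), neg_abs_le (σ 0), abs_nonneg (a * σ R), abs_nonneg (σ 0)]

/-- For every weight function σ there exist an entire function Q and
a ∈ (0,1] such that on every horizontal strip |Im z| ≤ n, |Q(z)| is bounded below by a
positive multiple of e^{aσ(|Re z|)} and above by a multiple of e^{σ(|Re z|)}. -/
theorem stmt5 (σ : ℝ → ℝ) (hσ : IsWeightFunction σ) :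
    ∃ (Q : ℂ → ℂ) (a : ℝ), Differentiable ℂ Q ∧ a ∈ Set.Ioc (0 : ℝ) 1 ∧
      ∀ n : ℕ,
        (∃ c > 0, ∀ z : ℂ, |z.im| ≤ n →
          c ≤ Real.exp (-(a * σ |z.re|)) * ‖Q z‖) ∧
        (∃ C : ℝ, ∀ z : ℂ, |z.im| ≤ n →
          Real.exp (-σ |z.re|) * ‖Q z‖ ≤ C) := by
  obtain ⟨K, T, hσKT⟩ := hσ.exists_doublingWeight
  have hK := hσKT.one_le_K
  obtain ⟨m, hm⟩ := pow_unbounded_of_one_lt (2 * K) one_lt_two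
  have hKN : 2 * K ≤ 2 ^ (2 * m) := hm.le.trans (pow_le_pow_right₀ one_le_two (by omega))
  set g := dyadicSeries (dyadicIncrement σ) (2 * m)
  have hg : Differentiable ℂ g :=
    differentiable_dyadicSeries (hσKT.summable_dyadicIncrement_div (by linarith))
  set A : ℝ := 6 * K ^ 3
  have hnorm (z : ℂ) : ‖exp (g z / A)‖ = Real.exp ((g z).re / A) := by
    rw [norm_exp, div_ofReal_re]
  refine ⟨fun z => exp (g z / A), 1 / (12 * K ^ 4), (hg.div_const _).cexp,
    ⟨by positivity, by rw [div_le_one (by positivity)]; nlinarith [one_le_pow₀ (n := 4) hK]⟩,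
    fun n => ?_⟩
  obtain ⟨C, hC⟩ := exists_bounds_on_strip_of_far (h := fun z => (g z).re / A) hσKT.monotoneOn
    ((continuous_re.comp hg.continuous).div_const A) (by positivity)
    fun z hzb hzR => hσKT.far_bounds_re_dyadicSeries (even_two_mul m) hKN hzb hzR
  refine ⟨⟨Real.exp (-C), Real.exp_pos _, fun z hz => ?_⟩, ⟨Real.exp C, fun z hz => ?_⟩⟩
  · rw [hnorm, ← Real.exp_add]; exact Real.exp_le_exp.2 (by linarith [(hC z hz).1])
  · rw [hnorm, ← Real.exp_add]; exact Real.exp_le_exp.2 (by linarith [(hC z hz).2])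
end

section
/- Let σ be a weight function and let U(ℂ) be the space of entire functions ψ such that sup_{|Im z| ≤ k} |ψ(z)|(1+|Re z|)^k < ∞ for every k ∈ ℕ, with the Fréchet topology generated by these norms. Let U_{(σ)}(ℂ) be the subspace of ψ ∈ U(ℂ) such that sup_{|Im z| ≤ k} |ψ(z)| e^{kσ(|Re z|)} < ∞ for every k. Then U_{(σ)}(ℂ) is dense in U(ℂ). -/
/-!
Iterating `σ (2 t) ≤ D σ t` shows that a weight function grows at most polynomially,
`σ t = O(t ^ m)`. For `N > m` even, `Re (z ^ N) ≥ |Re z| ^ N / 2` far out in every horizontal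
strip, so `exp (-δ z ^ N)` beats `exp (k σ |Re z|)` there and `φ = ψ · exp (-δ z ^ N)` lies in
`U_{(σ)}(ℂ)`. For the approximation, far out `|1 - exp (-δ z ^ N)| ≤ 2` and one more power of
`1 + |Re z|` in the bound on `ψ` makes `ψ` small, while on the remaining compact piece
`exp (-δ z ^ N) → 1` uniformly as `δ → 0`.
-/

open Filter Asymptotics

theorem exists_isBigO_pow_of_isBigO_comp_two_mul {f : ℝ → ℝ} (hmono : MonotoneOn f (Set.Ici 0))
    (hnonneg : ∀ t, 0 ≤ t → 0 ≤ f t) (hdouble : (fun t => f (2 * t)) =O[atTop] f) :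
    ∃ m : ℕ, f =O[atTop] fun t => t ^ m := by
  obtain ⟨C, hC⟩ := hdouble.bound
  obtain ⟨T₀, hT₀⟩ := eventually_atTop.1 hC
  set T := max T₀ 1
  have hT : 0 < T := lt_of_lt_of_le one_pos (le_max_right _ _)
  obtain ⟨m, hm⟩ := pow_unbounded_of_one_lt C one_lt_two
  have hstep : ∀ t, T ≤ t → f (2 * t) ≤ 2 ^ m * f t := by
    intro t ht
    have h0 : 0 ≤ t := hT.le.trans ht
    have h := hT₀ t ((le_max_left _ _).trans ht)
    rw [Real.norm_of_nonneg (hnonneg _ (by positivity)), Real.norm_of_nonneg (hnonneg t h0)] at h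
    nlinarith [hnonneg t h0]
  have hf2T : 0 ≤ f (2 * T) := hnonneg _ (by positivity)
  have hsmall : ∀ t, T ≤ t → t ≤ 2 * T → f t ≤ f (2 * T) * (t / T) ^ m := fun t ht ht' =>
    calc f t ≤ f (2 * T) := hmono (hT.le.trans ht) (by simp only [Set.mem_Ici]; positivity) ht'
      _ ≤ f (2 * T) * (t / T) ^ m :=
        le_mul_of_one_le_right hf2T (one_le_pow₀ ((one_le_div hT).2 ht))
  have hdyadic : ∀ n : ℕ, ∀ t, T ≤ t → t ≤ 2 ^ n * T → f t ≤ f (2 * T) * (t / T) ^ m := by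
    intro n
    induction n with
    | zero => exact fun t ht ht' => hsmall t ht (by linarith)
    | succ n ih =>
      intro t ht ht'
      rcases le_or_gt t (2 * T) with h | h
      · exact hsmall t ht h
      calc f t = f (2 * (t / 2)) := by ring_nf
        _ ≤ 2 ^ m * (f (2 * T) * (t / 2 / T) ^ m) := by
          refine (hstep _ (by linarith)).trans (mul_le_mul_of_nonneg_left ?_ (by positivity))
          exact ih _ (by linarith) (by rw [pow_succ] at ht'; linarith)
        _ = f (2 * T) * (t / T) ^ m := by rw [div_right_comm, div_pow]; field_simp
  refine ⟨m, IsBigO.of_bound (f (2 * T) / T ^ m) ?_⟩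
  filter_upwards [eventually_ge_atTop T] with t ht
  obtain ⟨n, hn⟩ := pow_unbounded_of_one_lt (t / T) one_lt_two
  have h0 : 0 ≤ t := hT.le.trans ht
  rw [Real.norm_of_nonneg (hnonneg t h0), Real.norm_of_nonneg (by positivity), div_mul_comm,
    mul_comm, ← div_pow]
  exact hdyadic n t ht (by rw [div_lt_iff₀ hT] at hn; linarith)

/-- Write `z = x (1 + i y / x)`: in a strip `y / x → 0`, so `(1 + i y / x) ^ N → 1`. -/
theorem exists_pow_abs_re_div_two_le_re_pow {N : ℕ} (hN : Even N) (a : ℝ) :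
    ∃ R, ∀ z : ℂ, |z.im| ≤ a → R ≤ |z.re| → |z.re| ^ N / 2 ≤ (z ^ N).re := by
  have hcont : ContinuousAt (fun w : ℂ => (1 + w) ^ N) 0 := by fun_prop
  obtain ⟨η, hη, hclose⟩ := Metric.continuousAt_iff.1 hcont (1 / 2) one_half_pos
  refine ⟨|a| / η + 1, fun z hza hzR => ?_⟩
  set x := z.re
  have hx : 0 < |x| := lt_of_lt_of_le (by positivity) hzR
  set w : ℂ := Complex.I * ↑(z.im / x)
  have hw : dist w 0 < η := by
    rw [dist_zero_right, norm_mul, Complex.norm_I, one_mul, Complex.norm_real, Real.norm_eq_abs,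
      abs_div, div_lt_iff₀ hx]
    have : |a| < η * |x| := by rw [← div_lt_iff₀' hη]; linarith
    linarith [le_abs_self a]
  have hz : z = x * (1 + w) := by
    have hx0 : z.re ≠ 0 := abs_pos.1 hx
    apply Complex.ext <;> simp [w, x, mul_div_cancel₀ _ hx0]
  have hre : 1 / 2 ≤ ((1 + w) ^ N).re := by
    have h := hclose hw
    rw [add_zero, one_pow, Complex.dist_eq] at h
    have := Complex.abs_re_le_norm ((1 + w) ^ N - 1)
    rw [Complex.sub_re, Complex.one_re] at this
    linarith [neg_abs_le (((1 + w) ^ N).re - 1)]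
  rw [hz, mul_pow, ← Complex.ofReal_pow, Complex.re_ofReal_mul, ← hN.pow_abs x]
  nlinarith [pow_pos hx N]

theorem norm_cexp_neg_ofReal_mul (δ : ℝ) (w : ℂ) :
    ‖Complex.exp (-(δ * w))‖ = Real.exp (-(δ * w.re)) := by
  rw [Complex.norm_exp, Complex.neg_re, Complex.re_ofReal_mul]

theorem exists_norm_cexp_mul_exp_le {σ : ℝ → ℝ} {N : ℕ} (hN : Even N)
    (hmono : MonotoneOn σ (Set.Ici 0)) (hσ : σ =o[atTop] fun t => t ^ N) {δ : ℝ} (hδ : 0 < δ)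
    (a : ℝ) {k : ℝ} (hk : 0 ≤ k) :
    ∃ C, ∀ z : ℂ, |z.im| ≤ a → ‖Complex.exp (-(δ * z ^ N))‖ * Real.exp (k * σ |z.re|) ≤ C := by
  obtain ⟨R₁, hR₁⟩ := eventually_atTop.1 ((hσ.const_mul_left k).bound (half_pos hδ))
  obtain ⟨R₂, hR₂⟩ := exists_pow_abs_re_div_two_le_re_pow hN a
  set R := max (max R₁ R₂) 0
  obtain ⟨M, hM⟩ : ∃ M, ∀ z ∈ Metric.closedBall (0 : ℂ) (R + a),
      ‖Complex.exp (-(δ * z ^ N))‖ ≤ M :=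
    (isCompact_closedBall _ _).exists_bound_of_continuousOn (by fun_prop)
  refine ⟨max 1 (M * Real.exp (k * σ R)), fun z hz => ?_⟩
  rcases le_total R |z.re| with hfar | hnear
  · refine le_max_of_le_left ?_
    have hre := hR₂ z hz ((le_max_right _ _).trans ((le_max_left _ _).trans hfar))
    have hσz := hR₁ |z.re| ((le_max_left _ _).trans ((le_max_left _ _).trans hfar))
    rw [Real.norm_eq_abs, Real.norm_of_nonneg (by positivity)] at hσz
    rw [norm_cexp_neg_ofReal_mul, ← Real.exp_add, Real.exp_le_one_iff]
    nlinarith [le_abs_self (k * σ |z.re|)]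
  · have hzM := hM z (mem_closedBall_zero_iff.2 (by
      linarith [Complex.norm_le_abs_re_add_abs_im z]))
    refine le_max_of_le_right (mul_le_mul hzM ?_ (Real.exp_pos _).le ((norm_nonneg _).trans hzM))
    exact Real.exp_le_exp.2 (mul_le_mul_of_nonneg_left
      (hmono (abs_nonneg z.re) (le_max_right (max R₁ R₂) 0) hnear) hk)

theorem exists_norm_sub_mul_cexp_le {N : ℕ} (hN : Even N) {ψ : ℂ → ℂ} {a : ℝ} {n : ℕ}
    (hψ : ∃ C, ∀ z : ℂ, |z.im| ≤ a → ‖ψ z‖ * (1 + |z.re|) ^ (n + 1) ≤ C) {ε : ℝ} (hε : 0 < ε) :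
    ∃ δ : ℝ, 0 < δ ∧ ∀ z : ℂ, |z.im| ≤ a →
      ‖ψ z - ψ z * Complex.exp (-(δ * z ^ N))‖ * (1 + |z.re|) ^ n ≤ ε := by
  obtain ⟨C₀, hC₀⟩ := hψ
  set C := max C₀ 1
  have hC : 0 < C := one_pos.trans_le (le_max_right _ _)
  obtain ⟨R₀, hR₀⟩ := exists_pow_abs_re_div_two_le_re_pow hN a
  set R := max R₀ (2 * C / ε)
  set m := min 1 (ε / (2 * C))
  set δ := m / ((R + a) ^ N + 1)
  have hpow : 0 ≤ (R + a) ^ N := hN.pow_nonneg _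
  have hδ : 0 < δ := by positivity
  refine ⟨δ, hδ, fun z hz => ?_⟩
  rw [← mul_one_sub, norm_mul, mul_right_comm]
  have hPC : ‖ψ z‖ * (1 + |z.re|) ^ n * (1 + |z.re|) ≤ C := by
    rw [mul_assoc, ← pow_succ]
    exact (hC₀ z hz).trans (le_max_left _ _)
  set P := ‖ψ z‖ * (1 + |z.re|) ^ n
  have hP : 0 ≤ P := by positivity
  rcases le_total R |z.re| with hfar | hnear
  · have hre := hR₀ z hz ((le_max_left _ _).trans hfar)
    have hexp : ‖Complex.exp (-(δ * z ^ N))‖ ≤ 1 := by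
      rw [norm_cexp_neg_ofReal_mul, Real.exp_le_one_iff]
      nlinarith [pow_nonneg (abs_nonneg z.re) N]
    have hsub : ‖1 - Complex.exp (-(δ * z ^ N))‖ ≤ 2 := by
      linarith [norm_sub_le 1 (Complex.exp (-(δ * z ^ N))), norm_one (α := ℂ)]
    have hPε : P * (2 * C / ε) ≤ C :=
      (mul_le_mul_of_nonneg_left (by linarith [le_max_right R₀ (2 * C / ε)]) hP).trans hPC
    rw [mul_div_assoc', div_le_iff₀ hε] at hPε
    have hP2 : P * 2 ≤ ε := le_of_mul_le_mul_right (by linarith) hC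
    nlinarith [mul_le_mul_of_nonneg_left hsub hP]
  · have hz' : ‖z‖ ^ N ≤ (R + a) ^ N :=
      pow_le_pow_left₀ (norm_nonneg z) (by linarith [Complex.norm_le_abs_re_add_abs_im z]) N
    have hw : ‖-(δ * z ^ N)‖ ≤ m := by
      rw [norm_neg, norm_mul, Complex.norm_real, Real.norm_of_nonneg hδ.le, norm_pow]
      calc δ * ‖z‖ ^ N ≤ δ * (R + a) ^ N := by gcongr
        _ = m * ((R + a) ^ N / ((R + a) ^ N + 1)) := by rw [div_mul_eq_mul_div, mul_div_assoc]
        _ ≤ m := mul_le_of_le_one_right (by positivity)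
          (div_le_one_of_le₀ (by linarith) (by positivity))
    have hsub : ‖1 - Complex.exp (-(δ * z ^ N))‖ ≤ ε / C := by
      rw [norm_sub_rev]
      refine (Complex.norm_exp_sub_one_le (hw.trans (min_le_left _ _))).trans ?_
      have := hw.trans (min_le_right _ _)
      rw [le_div_iff₀ (by positivity)] at this
      rw [le_div_iff₀ hC]
      linarith
    calc P * ‖1 - Complex.exp (-(δ * z ^ N))‖ ≤ C * (ε / C) :=
          mul_le_mul (by nlinarith [abs_nonneg z.re]) hsub (norm_nonneg _) hC.le
      _ = ε := mul_div_cancel₀ ε hC.ne'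

/-- Density of U_{(σ)}(ℂ) in the Silva space U(ℂ), expressed via the
defining seminorms: any ψ ∈ U(ℂ) can be approximated within ε in the first K seminorms
of U(ℂ) by an element φ ∈ U_{(σ)}(ℂ). -/
theorem stmt6 (σ : ℝ → ℝ) (hσ : IsWeightFunction σ)
    (ψ : ℂ → ℂ) (hψ : Differentiable ℂ ψ)
    (hψU : ∀ k : ℕ, ∃ C : ℝ, ∀ z : ℂ, |z.im| ≤ k →
      ‖ψ z‖ * (1 + |z.re|) ^ k ≤ C)
    (ε : ℝ) (hε : 0 < ε) (K : ℕ) :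
    ∃ φ : ℂ → ℂ, Differentiable ℂ φ ∧
      (∀ k : ℕ, ∃ C : ℝ, ∀ z : ℂ, |z.im| ≤ k →
        ‖φ z‖ * Real.exp (k * σ |z.re|) ≤ C) ∧
      ∀ k ≤ K, ∀ z : ℂ, |z.im| ≤ k →
        ‖ψ z - φ z‖ * (1 + |z.re|) ^ k ≤ ε := by
  obtain ⟨hmono, hnonneg, hdouble, -⟩ := hσ
  obtain ⟨m, hm⟩ := exists_isBigO_pow_of_isBigO_comp_two_mul hmono hnonneg hdouble
  obtain ⟨N, hN, hσN⟩ : ∃ N, Even N ∧ σ =o[atTop] fun t => t ^ N :=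
    ⟨2 * (m + 1), even_two_mul _, hm.trans_isLittleO (isLittleO_pow_pow_atTop_of_lt (by omega))⟩
  obtain ⟨δ, hδ, happrox⟩ := exists_norm_sub_mul_cexp_le hN (hψU (K + 1)) hε
  refine ⟨fun z => ψ z * Complex.exp (-(δ * z ^ N)), by fun_prop, fun k => ?_, ?_⟩
  · obtain ⟨C, hC⟩ := hψU k
    obtain ⟨M, hM⟩ := exists_norm_cexp_mul_exp_le hN hmono hσN hδ k (Nat.cast_nonneg k)
    refine ⟨C * M, fun z hz => ?_⟩
    have hψC : ‖ψ z‖ ≤ C :=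
      (le_mul_of_one_le_right (norm_nonneg _) (one_le_pow₀ (by simp))).trans (hC z hz)
    rw [norm_mul, mul_assoc]
    exact mul_le_mul hψC (hM z hz) (by positivity) ((norm_nonneg _).trans hψC)
  · intro k hk z hz
    have hkK : (k : ℝ) ≤ (K + 1 : ℕ) := by exact_mod_cast hk.trans K.le_succ
    calc _ ≤ ‖ψ z - ψ z * Complex.exp (-(δ * z ^ N))‖ * (1 + |z.re|) ^ K := by
          gcongr
          simp
      _ ≤ ε := happrox z (hz.trans hkK)
end

section
/- Let G be a Lie group with length function |·|_G, 𝔤 a finite-dimensional normed real vector space, and Φ: 𝔤 → G a diffeomorphism satisfying |Φ(X)|_G ≤ b|X|_𝔤 + B for constants b, B > 0. Suppose f: 𝔤 → ℂ is smooth and for every constant-coefficient differential operator P and every λ > 0, sup_X e^{λ|X|_𝔤}|P f(X)| < ∞ (i.e., f ∈ K(𝔤)). If moreover the pullback along Φ of every left- or right-invariant differential operator on G lies in the algebra generated by O_M^exp(𝔤) and constant-coefficient operators, then the pushforward Φ_*(f) = f ∘ Φ^{-1} belongs to K(G), i.e., for every λ > 0 and every left-invariant differential operator L, sup_g e^{λ|g|_G}(|(LΦ_*f)(g)|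 + |((ι_*L)Φ_*f)(g)|) < ∞. -/
noncomputable section

variable {𝔤 : Type*} [NormedAddCommGroup 𝔤] [NormedSpace ℝ 𝔤]

/-- Iterated directional derivative along a list of directions: the constant-coefficient
differential operator `∂_{v₁} ⋯ ∂_{v_r}`. -/
def derivAlong (l : List 𝔤) (f : 𝔤 → ℂ) : 𝔤 → ℂ :=
  l.foldr (fun v g => fun x => fderiv ℝ g x v) f

/-- The algebra `O_M^exp(𝔤)`: smooth functions that are exponentially bounded together
with all their derivatives. -/
def OMexpC (f : 𝔤 → ℂ) : Prop :=
  ContDiff ℝ (⊤ : ℕ∞) f ∧ ∀ l : List 𝔤, ∃ lam > 0, ∃ C : ℝ, ∀ x,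
    ‖derivAlong l f x‖ ≤ C * Real.exp (lam * ‖x‖)

/-- The space `K(𝔤)` of exponentially rapidly decreasing smooth functions on the
finite-dimensional normed space `𝔤`. -/
def KFun (f : 𝔤 → ℂ) : Prop :=
  ContDiff ℝ (⊤ : ℕ∞) f ∧ ∀ (l : List 𝔤) (lam : ℝ), 0 < lam → ∃ C : ℝ, ∀ x,
    Real.exp (lam * ‖x‖) * ‖derivAlong l f x‖ ≤ C

/-- If `Φ : 𝔤 ≃ G` satisfies `|Φ(X)|_G ≤ b‖X‖ + B`, `f ∈ K(𝔤)`, and the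
pullback along `Φ` of every operator `L` in a family `𝒟` (e.g. the left- and
right-invariant differential operators on `G`) lies in the algebra `𝔇_exp(𝔤)` generated
by `O_M^exp(𝔤)` and constant-coefficient operators, then the pushforward `Φ_* f = f ∘ Φ⁻¹`
satisfies the `K(G)` estimates: for every `λ > 0` and every `L ∈ 𝒟`,
`sup_g e^{λ|g|_G} |L(Φ_* f)(g)| < ∞`. -/
theorem stmt13 [FiniteDimensional ℝ 𝔤]
    {G : Type*} [Group G] (ℓ : G → ℝ)
    (Φ : 𝔤 ≃ G) (bc Bc : ℝ) (hbc : 0 < bc) (hBc : 0 < Bc)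
    (hΦ : ∀ X : 𝔤, ℓ (Φ X) ≤ bc * ‖X‖ + Bc)
    (f : 𝔤 → ℂ) (hf : KFun f)
    (𝒟 : Set ((G → ℂ) → G → ℂ))
    (h𝒟 : ∀ L ∈ 𝒟, ∃ (r : ℕ) (coeff : Fin r → 𝔤 → ℂ) (dirs : Fin r → List 𝔤),
      (∀ i, OMexpC (coeff i)) ∧
      ∀ h : 𝔤 → ℂ, ContDiff ℝ (⊤ : ℕ∞) h → ∀ g : G,
        L (fun g' => h (Φ.symm g')) g =
          ∑ i, coeff i (Φ.symm g) * derivAlong (dirs i) h (Φ.symm g)) :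
    ∀ L ∈ 𝒟, ∀ lam : ℝ, 0 < lam → ∃ C : ℝ, ∀ g : G,
      Real.exp (lam * ℓ g) * ‖L (fun g' => f (Φ.symm g')) g‖ ≤ C := by
  intro L hL lam hlam
  obtain ⟨r, coeff, dirs, hcoeff, hrep⟩ := h𝒟 L hL
  have hc : ∀ i : Fin r, ∃ li > (0:ℝ), ∃ Ci : ℝ, ∀ x,
      ‖coeff i x‖ ≤ Ci * Real.exp (li * ‖x‖) := by
    intro i
    obtain ⟨li, hli, Ci, h⟩ := (hcoeff i).2 []
    exact ⟨li, hli, Ci, fun x => by simpa [derivAlong] using h x⟩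
  choose li hli Ci hCi using hc
  have hd : ∀ i : Fin r, ∃ Di : ℝ, ∀ x,
      Real.exp ((lam * bc + li i) * ‖x‖) * ‖derivAlong (dirs i) f x‖ ≤ Di :=
    fun i => hf.2 (dirs i) _ (add_pos (mul_pos hlam hbc) (hli i))
  choose Di hDi using hd
  have hCi0 : ∀ i, 0 ≤ Ci i := by
    intro i
    have h0 := hCi i 0
    have := (norm_nonneg (coeff i 0)).trans h0
    nlinarith [Real.exp_pos (li i * ‖(0:𝔤)‖)]
  have hDi0 : ∀ i, 0 ≤ Di i := fun i =>
    le_trans (by positivity) (hDi i 0)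
  refine ⟨∑ i, Real.exp (lam * Bc) * (Ci i * Di i), fun g => ?_⟩
  have hg : ℓ g ≤ bc * ‖Φ.symm g‖ + Bc := by
    simpa using hΦ (Φ.symm g)
  set X := Φ.symm g with hX
  rw [hrep f hf.1 g]
  calc Real.exp (lam * ℓ g) * ‖∑ i, coeff i X * derivAlong (dirs i) f X‖
      ≤ Real.exp (lam * ℓ g) *
          ∑ i, ‖coeff i X‖ * ‖derivAlong (dirs i) f X‖ := by
        refine mul_le_mul_of_nonneg_left ?_ (le_of_lt (Real.exp_pos _))
        refine le_trans (norm_sum_le _ _) (le_of_eq ?_)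
        exact Finset.sum_congr rfl fun i _ => norm_mul _ _
    _ = ∑ i, Real.exp (lam * ℓ g) *
          (‖coeff i X‖ * ‖derivAlong (dirs i) f X‖) := by
        rw [Finset.mul_sum]
    _ ≤ ∑ i, Real.exp (lam * Bc) * (Ci i * Di i) := by
        refine Finset.sum_le_sum fun i _ => ?_
        have h1 : Real.exp (lam * ℓ g) ≤ Real.exp (lam * Bc) * Real.exp (lam * bc * ‖X‖) := by
          rw [← Real.exp_add]
          apply Real.exp_le_exp.2
          nlinarith [hg]
        have h2 : ‖coeff i X‖ ≤ Ci i * Real.exp (li i * ‖X‖) := hCi i X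
        have h3 : Real.exp ((lam * bc + li i) * ‖X‖) *
            ‖derivAlong (dirs i) f X‖ ≤ Di i := hDi i X
        have habs0 : (0:ℝ) ≤ ‖derivAlong (dirs i) f X‖ := norm_nonneg _
        have habs0' : (0:ℝ) ≤ ‖coeff i X‖ := norm_nonneg _
        calc Real.exp (lam * ℓ g) *
              (‖coeff i X‖ * ‖derivAlong (dirs i) f X‖)
            ≤ (Real.exp (lam * Bc) * Real.exp (lam * bc * ‖X‖)) *
              ((Ci i * Real.exp (li i * ‖X‖)) * ‖derivAlong (dirs i) f X‖) := by
              apply mul_le_mul h1 (mul_le_mul h2 le_rfl habs0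
                (mul_nonneg (hCi0 i) (le_of_lt (Real.exp_pos _))))
                (mul_nonneg habs0' habs0) (by positivity)
          _ = Real.exp (lam * Bc) * (Ci i *
              (Real.exp ((lam * bc + li i) * ‖X‖) * ‖derivAlong (dirs i) f X‖)) := by
              rw [show (lam * bc + li i) * ‖X‖ = lam * bc * ‖X‖ + li i * ‖X‖ by ring,
                Real.exp_add]; ring
          _ ≤ Real.exp (lam * Bc) * (Ci i * Di i) := by
              have := mul_le_mul_of_nonneg_left h3 (hCi0 i)
              exact mul_le_mul_of_nonneg_left this (le_of_lt (Real.exp_pos _))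

end
end

section
/- Let φ ∈ K(ℝ), i.e., φ is smooth with sup_t e^{λ|t|}|φ^{(k)}(t)| < ∞ for all λ > 0 and k ∈ ℕ. Then the Fourier transform φ̂(ξ) = ∫_ℝ φ(t) e^{iξt} dt extends to an entire function on ℂ, and for every k ∈ ℕ, sup_{|Im z| ≤ k} |φ̂(z)| (1+|Re z|)^k < ∞; that is, φ̂ belongs to the Silva space U(ℂ). -/
open MeasureTheory
open Filter

/-- The space `K(ℝ)` of (complex-valued) smooth functions on the real line all of whose
derivatives decay faster than `e^{-λ|t|}` for every `λ > 0`. -/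
def KC (f : ℝ → ℂ) : Prop :=
  ContDiff ℝ (⊤ : ℕ∞) f ∧ ∀ (k : ℕ) (lam : ℝ), 0 < lam → ∃ C : ℝ, ∀ t : ℝ,
    Real.exp (lam * |t|) * ‖iteratedDeriv k f t‖ ≤ C

noncomputable def ez (z : ℂ) (t : ℝ) : ℂ := Complex.exp (Complex.I * z * t)

lemma abs_ez (z : ℂ) (t : ℝ) : ‖ez z t‖ = Real.exp (-z.im * t) := by
  rw [ez, Complex.norm_exp]; congr 1; simp [Complex.mul_re, Complex.mul_im]

lemma abs_ez_le {z : ℂ} {a : ℝ} (hz : |z.im| ≤ a) (t : ℝ) :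
    ‖ez z t‖ ≤ Real.exp (a * |t|) := by
  rw [abs_ez]
  apply Real.exp_le_exp.2
  calc -z.im * t ≤ |(-z.im) * t| := le_abs_self _
    _ = |z.im| * |t| := by rw [abs_mul, abs_neg]
    _ ≤ a * |t| := by gcongr

lemma continuous_ez (z : ℂ) : Continuous (ez z) := by
  unfold ez; fun_prop

lemma hasDerivAt_ez (z : ℂ) (t : ℝ) :
    HasDerivAt (fun s : ℝ => ez z s) (Complex.I * z * ez z t) t := by
  have h0 : HasDerivAt (fun w : ℂ => Complex.I * z * w) (Complex.I * z) (t : ℂ) := by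
    simpa using (hasDerivAt_id ((t : ℝ) : ℂ)).const_mul (Complex.I * z)
  have h1 := ((Complex.hasDerivAt_exp (Complex.I * z * t)).comp _ h0).comp_ofReal
  rw [show (Complex.exp (Complex.I * z * ↑t) * (Complex.I * z)) = Complex.I * z * ez z t by
    rw [ez]; ring] at h1
  exact h1

lemma hasDerivAt_ez_z (t : ℝ) (z : ℂ) :
    HasDerivAt (fun w : ℂ => ez w t) (Complex.I * t * ez z t) z := by
  have h1 : HasDerivAt (fun w : ℂ => Complex.I * w * (t : ℂ)) (Complex.I * t) z := by
    have h : HasDerivAt (fun w : ℂ => (Complex.I * (t:ℂ)) * w) (Complex.I * ↑t * 1) z :=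
      (hasDerivAt_id z).const_mul _
    rw [mul_one] at h
    convert h using 2 with w; ring
  have h2 := (Complex.hasDerivAt_exp (Complex.I * z * t)).comp z h1
  rw [show Complex.exp (Complex.I * z * ↑t) * (Complex.I * ↑t) = Complex.I * ↑t * ez z t by
    rw [ez]; ring] at h2
  exact h2

lemma integrable_exp_neg_abs : Integrable (fun t : ℝ => Real.exp (-|t|)) := by
  rw [← integrableOn_univ, ← Set.Iic_union_Ioi (a := (0:ℝ))]
  apply IntegrableOn.union
  · exact (integrableOn_exp_Iic 0).congr_fun
      (fun x hx => by rw [abs_of_nonpos hx, neg_neg]) measurableSet_Iic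
  · exact (exp_neg_integrableOn_Ioi 0 one_pos).congr_fun
      (fun x hx => by rw [abs_of_pos hx]; ring_nf) measurableSet_Ioi

lemma integrable_of_bound {h : ℝ → ℂ} (hc : Continuous h) {C : ℝ}
    (hb : ∀ t, ‖h t‖ ≤ C * Real.exp (-|t|)) : Integrable h :=
  (integrable_exp_neg_abs.const_mul C).mono' hc.aestronglyMeasurable
    (ae_of_all _ fun t => hb t)

lemma KC.decay {φ : ℝ → ℂ} (hφ : KC φ) (k : ℕ) {lam : ℝ} (hl : 0 < lam) :
    ∃ C : ℝ, ∀ t, ‖iteratedDeriv k φ t‖ ≤ C * Real.exp (-(lam * |t|)) := by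
  obtain ⟨C, hC⟩ := hφ.2 k lam hl
  refine ⟨C, fun t => ?_⟩
  have h1 := hC t
  have h2 : (0:ℝ) < Real.exp (lam * |t|) := Real.exp_pos _
  rw [Real.exp_neg]
  rw [mul_comm, inv_mul_eq_div, le_div_iff₀ h2, mul_comm]
  exact h1

lemma KC.deriv {φ : ℝ → ℂ} (hφ : KC φ) : KC (deriv φ) := by
  constructor
  · exact (contDiff_infty_iff_deriv.1 hφ.1).2
  · intro k lam hl
    obtain ⟨C, hC⟩ := hφ.2 (k+1) lam hl
    exact ⟨C, fun t => by rw [← iteratedDeriv_succ']; exact hC t⟩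

lemma KC.iter {φ : ℝ → ℂ} (hφ : KC φ) : ∀ n, KC (iteratedDeriv n φ)
  | 0 => by simpa [iteratedDeriv_zero] using hφ
  | (n+1) => by
      rw [iteratedDeriv_succ']
      exact (hφ.deriv).iter n

lemma kc_pointwise {f : ℝ → ℂ} (hf : KC f) {a : ℝ} (ha : 0 ≤ a) :
    ∃ C : ℝ, ∀ z : ℂ, |z.im| ≤ a → ∀ t : ℝ,
      ‖f t * ez z t‖ ≤ C * Real.exp (-|t|) := by
  obtain ⟨C, hC⟩ := hf.decay 0 (lam := a + 1) (by linarith)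
  simp only [iteratedDeriv_zero] at hC
  refine ⟨C, fun z hz t => ?_⟩
  have h0 : (0:ℝ) ≤ C * Real.exp (-((a+1) * |t|)) :=
    le_trans (norm_nonneg _) (hC t)
  calc ‖f t * ez z t‖ = ‖f t‖ * ‖ez z t‖ := norm_mul _ _
    _ ≤ (C * Real.exp (-((a+1) * |t|))) * Real.exp (a * |t|) :=
        mul_le_mul (hC t) (abs_ez_le hz t) (norm_nonneg _) h0
    _ = C * Real.exp (-|t|) := by
        rw [mul_assoc, ← Real.exp_add]
        congr 1
        rw [Real.exp_eq_exp]
        ring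

lemma kc_integrable {f : ℝ → ℂ} (hf : KC f) {a : ℝ} {z : ℂ} (hz : |z.im| ≤ a) (ha : 0 ≤ a) :
    Integrable (fun t => f t * ez z t) := by
  obtain ⟨C, hC⟩ := kc_pointwise hf ha
  exact integrable_of_bound (hf.1.continuous.mul (continuous_ez z)) (hC z hz)

lemma tendsto_bound_atTop (C : ℝ) :
    Tendsto (fun t : ℝ => C * Real.exp (-|t|)) atTop (nhds 0) := by
  have h := (Real.tendsto_exp_neg_atTop_nhds_zero.comp tendsto_abs_atTop_atTop).const_mul C
  simpa using h

lemma tendsto_bound_atBot (C : ℝ) :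
    Tendsto (fun t : ℝ => C * Real.exp (-|t|)) atBot (nhds 0) := by
  have h := (Real.tendsto_exp_neg_atTop_nhds_zero.comp tendsto_abs_atBot_atTop).const_mul C
  simpa using h

lemma ibp {f : ℝ → ℂ} (hf : KC f) (z : ℂ) :
    ∫ t : ℝ, deriv f t * ez z t = -(Complex.I * z) * ∫ t : ℝ, f t * ez z t := by
  have ha0 : (0:ℝ) ≤ |z.im| := abs_nonneg _
  have hz : |z.im| ≤ |z.im| := le_refl _
  have hint0 : Integrable (fun t => f t * ez z t) := kc_integrable hf hz ha0
  have hint1 : Integrable (fun t => deriv f t * ez z t) := kc_integrable hf.deriv hz ha0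
  set u' : ℝ → ℂ := fun t => deriv f t * ez z t + Complex.I * z * (f t * ez z t) with hu'def
  have hu' : ∀ t : ℝ, HasDerivAt (fun s => f s * ez z s) (u' t) t := by
    intro t
    have hd : HasDerivAt f (deriv f t) t :=
      ((hf.1.differentiable (by simp)) t).hasDerivAt
    have h := hd.mul (hasDerivAt_ez z t)
    exact h.congr_deriv (by simp only [hu'def]; ring)
  have hint' : Integrable u' := hint1.add (hint0.const_mul _)
  obtain ⟨C, hC⟩ := kc_pointwise hf ha0
  have hnorm : ∀ t : ℝ, ‖f t * ez z t‖ ≤ C * Real.exp (-|t|) := fun t => hC z hz t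
  have htop : Tendsto (fun t => f t * ez z t) atTop (nhds 0) :=
    squeeze_zero_norm hnorm (tendsto_bound_atTop C)
  have hbot : Tendsto (fun t => f t * ez z t) atBot (nhds 0) :=
    squeeze_zero_norm hnorm (tendsto_bound_atBot C)
  have hIic : ∫ t in Set.Iic (0:ℝ), u' t = f 0 * ez z 0 - 0 :=
    integral_Iic_of_hasDerivAt_of_tendsto' (fun x _ => hu' x) hint'.integrableOn hbot
  have hIoi : ∫ t in Set.Ioi (0:ℝ), u' t = 0 - f 0 * ez z 0 :=
    integral_Ioi_of_hasDerivAt_of_tendsto' (fun x _ => hu' x) hint'.integrableOn htop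
  have htot : ∫ t : ℝ, u' t = 0 := by
    rw [← intervalIntegral.integral_Iic_add_Ioi hint'.integrableOn hint'.integrableOn,
      hIic, hIoi]
    ring
  rw [hu'def] at htot
  rw [integral_add hint1 (hint0.const_mul _), MeasureTheory.integral_const_mul] at htot
  linear_combination htot

lemma iter_ibp (n : ℕ) : ∀ {f : ℝ → ℂ}, KC f → ∀ z : ℂ,
    ∫ t : ℝ, iteratedDeriv n f t * ez z t
      = (-(Complex.I * z))^n * ∫ t : ℝ, f t * ez z t := by
  induction n with
  | zero => intro f hf z; simp [iteratedDeriv_zero]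
  | succ n ih =>
      intro f hf z
      calc ∫ t : ℝ, iteratedDeriv (n+1) f t * ez z t
          = ∫ t : ℝ, iteratedDeriv n (deriv f) t * ez z t := by rw [iteratedDeriv_succ']
        _ = (-(Complex.I * z))^n * ∫ t : ℝ, deriv f t * ez z t := ih hf.deriv z
        _ = (-(Complex.I * z))^n * (-(Complex.I * z) * ∫ t : ℝ, f t * ez z t) := by
            rw [ibp hf z]
        _ = (-(Complex.I * z))^(n+1) * ∫ t : ℝ, f t * ez z t := by ring

/-- The Fourier transform of `φ ∈ K(ℝ)` extends to an entire function
belonging to the Silva space `U(ℂ)`. -/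
theorem stmt15 (φ : ℝ → ℂ) (hφ : KC φ) :
    ∃ F : ℂ → ℂ, Differentiable ℂ F ∧
      (∀ ξ : ℝ, F (ξ : ℂ) = ∫ t : ℝ, φ t * Complex.exp (Complex.I * (ξ : ℂ) * (t : ℂ))) ∧
      ∀ k : ℕ, ∃ C : ℝ, ∀ z : ℂ, |z.im| ≤ k →
        ‖F z‖ * (1 + |z.re|) ^ k ≤ C := by
  refine ⟨fun z => ∫ t : ℝ, φ t * ez z t, ?_, fun ξ => rfl, ?_⟩
  · -- Differentiability
    intro z₀
    set a : ℝ := |z₀.im| + 1 with hadef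
    obtain ⟨C, hC⟩ := hφ.decay 0 (lam := a + 2) (by positivity)
    simp only [iteratedDeriv_zero] at hC
    have key := hasDerivAt_integral_of_dominated_loc_of_deriv_le (μ := volume)
      (F := fun z t => φ t * ez z t) (F' := fun z t => φ t * (Complex.I * t * ez z t))
      (x₀ := z₀) (s := Metric.ball z₀ 1) (bound := fun t => C * Real.exp (-|t|))
      (Metric.ball_mem_nhds z₀ one_pos)
      (Eventually.of_forall fun z =>
        (hφ.1.continuous.mul (continuous_ez z)).aestronglyMeasurable)
      (kc_integrable hφ (a := a) (by rw [hadef]; linarith) (by positivity))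
      ((hφ.1.continuous.mul ((continuous_const.mul Complex.continuous_ofReal).mul
        (continuous_ez z₀))).aestronglyMeasurable)
      (ae_of_all _ fun t z hzball => ?_) (integrable_exp_neg_abs.const_mul C)
      (ae_of_all _ fun t z _ => (hasDerivAt_ez_z t z).const_mul (φ t))
    · exact key.2.differentiableAt
    · -- the bound
      have hz : |z.im| ≤ a := by
        have h1 : |z.im - z₀.im| ≤ ‖z - z₀‖ := by
          simpa using Complex.abs_im_le_norm (z - z₀)
        have h2 : ‖z - z₀‖ < 1 := by simpa [Complex.dist_eq] using hzball
        rw [hadef]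
        calc |z.im| ≤ |z.im - z₀.im| + |z₀.im| := by
              simpa using abs_add_le (z.im - z₀.im) z₀.im
          _ ≤ |z₀.im| + 1 := by linarith
      have habs : ∀ s : ℝ, |s| ≤ Real.exp |s| := fun s =>
        le_trans (by linarith [abs_nonneg s]) (Real.add_one_le_exp |s|)
      have h0 : (0:ℝ) ≤ C * Real.exp (-((a+2) * |t|)) :=
        le_trans (norm_nonneg _) (hC t)
      calc ‖φ t * (Complex.I * t * ez z t)‖
          = ‖φ t‖ * (|t| * ‖ez z t‖) := by
            rw [norm_mul, norm_mul, norm_mul, Complex.norm_I, one_mul,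
              Complex.norm_real, Real.norm_eq_abs]
        _ ≤ (C * Real.exp (-((a+2) * |t|))) * (Real.exp |t| * Real.exp (a * |t|)) := by
            apply mul_le_mul (hC t) _ (by positivity) h0
            exact mul_le_mul (habs t) (abs_ez_le hz t) (norm_nonneg _)
              (Real.exp_pos _).le
        _ = C * Real.exp (-|t|) := by
            rw [← Real.exp_add, mul_assoc, ← Real.exp_add]
            congr 1
            rw [Real.exp_eq_exp]
            ring
  · -- the bounds
    intro k
    have hk0 : (0:ℝ) ≤ (k:ℝ) := Nat.cast_nonneg k
    obtain ⟨C0, hC0⟩ := kc_pointwise hφ (a := (k:ℝ)) hk0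
    obtain ⟨Ck, hCk⟩ := kc_pointwise (hφ.iter k) (a := (k:ℝ)) hk0
    set I0 : ℝ := ∫ t : ℝ, C0 * Real.exp (-|t|) with hI0
    set Ik : ℝ := ∫ t : ℝ, Ck * Real.exp (-|t|) with hIk
    refine ⟨2^k * (I0 + Ik), fun z hz => ?_⟩
    have hint0 : Integrable (fun t => φ t * ez z t) := kc_integrable hφ hz hk0
    have hintk : Integrable (fun t => iteratedDeriv k φ t * ez z t) :=
      kc_integrable (hφ.iter k) hz hk0
    have hB0 : ‖∫ t : ℝ, φ t * ez z t‖ ≤ I0 := by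
      calc ‖∫ t : ℝ, φ t * ez z t‖ ≤ ∫ t : ℝ, ‖φ t * ez z t‖ :=
            norm_integral_le_integral_norm _
        _ ≤ I0 := integral_mono hint0.norm (integrable_exp_neg_abs.const_mul C0)
            (fun t => hC0 z hz t)
    have hBk : ‖z‖ ^ k * ‖∫ t : ℝ, φ t * ez z t‖ ≤ Ik := by
      have hiter := iter_ibp k hφ z
      have habs : ‖z‖ ^ k * ‖∫ t : ℝ, φ t * ez z t‖
          = ‖∫ t : ℝ, iteratedDeriv k φ t * ez z t‖ := by
        rw [hiter, norm_mul, norm_pow, norm_neg, norm_mul, Complex.norm_I, one_mul]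
      rw [habs]
      calc ‖∫ t : ℝ, iteratedDeriv k φ t * ez z t‖
          ≤ ∫ t : ℝ, ‖iteratedDeriv k φ t * ez z t‖ := norm_integral_le_integral_norm _
        _ ≤ Ik := integral_mono hintk.norm (integrable_exp_neg_abs.const_mul Ck)
            (fun t => hCk z hz t)
    have hre : |z.re| ≤ ‖z‖ := Complex.abs_re_le_norm z
    have hpow : (1 + |z.re|)^k ≤ 2^k * (1 + ‖z‖ ^ k) := by
      have h1 : 1 + |z.re| ≤ 2 * max 1 (‖z‖) := by
        have := le_max_left 1 (‖z‖)
        have := le_max_right 1 (‖z‖)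
        linarith
      calc (1 + |z.re|)^k ≤ (2 * max 1 (‖z‖))^k :=
            pow_le_pow_left₀ (by positivity) h1 k
        _ = 2^k * (max 1 (‖z‖))^k := mul_pow _ _ _
        _ ≤ 2^k * (1 + ‖z‖ ^ k) := by
            gcongr 2^k * ?_
            rcases le_total 1 (‖z‖) with h | h
            · rw [max_eq_right h]
              nlinarith [pow_nonneg (norm_nonneg z) k]
            · rw [max_eq_left h]
              simp only [one_pow]
              nlinarith [pow_nonneg (norm_nonneg z) k]
    calc ‖∫ t : ℝ, φ t * ez z t‖ * (1 + |z.re|)^k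
        ≤ ‖∫ t : ℝ, φ t * ez z t‖ * (2^k * (1 + ‖z‖ ^ k)) :=
          mul_le_mul_of_nonneg_left hpow (norm_nonneg _)
      _ = 2^k * (‖∫ t : ℝ, φ t * ez z t‖
            + ‖z‖ ^ k * ‖∫ t : ℝ, φ t * ez z t‖) := by ring
      _ ≤ 2^k * (I0 + Ik) := by
          apply mul_le_mul_of_nonneg_left (add_le_add hB0 hBk) (by positivity)
end

section
/- Let π be a representation of exponential type of ℝ on a Fréchet space E, with space of smooth vectors E^∞ (carrying its canonical Fréchet topology). A subset B ⊆ E^∞ is bounded if and only if the family of orbit maps {γ_v : v ∈ B}, γ_v(t) = π(t)v, is a bounded subset of O_C^exp(ℝ, E), meaning: for every continuous seminorm p on E there exists λ > 0 such that sup_{v∈B, t∈ℝ} e^{−λ|t|} p(γ_v^{(k)}(t)) < ∞ for every k ∈ ℕ. -/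
/-- Derivative of a curve with values in a topological vector space, defined by the
limit of difference quotients. -/
def HasTVSDerivAt {E : Type*} [AddCommGroup E] [Module ℝ E] [TopologicalSpace E]
    (f : ℝ → E) (f' : E) (t : ℝ) : Prop :=
  Filter.Tendsto (fun h : ℝ => h⁻¹ • (f (t + h) - f t))
    (nhdsWithin 0 {(0 : ℝ)}ᶜ) (nhds f')

/-!
Differentiating `γ_v(s + t) = π(s) γ_v(t)` in `t` shows that the derivatives of an orbit are again
orbits, `γ_v^{(k)}(t) = π(t) γ_v^{(k)}(0)`, so everything is about the sets
`B_k = {γ_v^{(k)}(0) : v ∈ B}` and their orbits. Evaluation at `t = 0` gives one direction. For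
the other, Baire's theorem applied to the closed cover
`{v | ∀ t, p(π t v) ≤ (n + 1) e^{(n + 1)|t|}}` of `E` gives a neighbourhood `V` of `0` and a
single `λ` with `p(π t w) ≤ C e^{λ|t|}` on `V`, and each bounded `B_k` is absorbed by `V`.
-/

open Filter Topology Bornology Uniformity

section HasTVSDerivAt

variable {E F : Type*} [AddCommGroup E] [Module ℝ E] [TopologicalSpace E]
  [AddCommGroup F] [Module ℝ F] [TopologicalSpace F] {f : ℝ → E} {a b : E} {t : ℝ}

theorem HasTVSDerivAt.unique [T2Space E] (ha : HasTVSDerivAt f a t) (hb : HasTVSDerivAt f b t) :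
    a = b :=
  tendsto_nhds_unique ha hb

theorem ContinuousLinearMap.hasTVSDerivAt_comp (T : E →L[ℝ] F) (h : HasTVSDerivAt f a t) :
    HasTVSDerivAt (fun s => T (f s)) (T a) t :=
  ((T.continuous.tendsto a).comp h).congr fun u => by simp [map_sub, map_smul]

theorem HasTVSDerivAt.comp_const_add (s : ℝ) (h : HasTVSDerivAt f a (s + t)) :
    HasTVSDerivAt (fun u => f (s + u)) a t := by
  unfold HasTVSDerivAt at h ⊢
  simpa only [add_assoc] using h

end HasTVSDerivAt

theorem orbit_derivative_eq_apply {E : Type*} [AddCommGroup E] [Module ℝ E] [TopologicalSpace E]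
    [T2Space E] (π : ℝ → E →L[ℝ] E) (hπadd : ∀ s t : ℝ, π (s + t) = (π s).comp (π t))
    {v : E} {f : ℕ → ℝ → E} (hf0 : ∀ t, f 0 t = π t v)
    (hf : ∀ (k : ℕ) (t : ℝ), HasTVSDerivAt (f k) (f (k + 1) t) t) (k : ℕ) (t : ℝ) :
    f k t = π t (f k 0) := by
  suffices h : ∀ s t, f k (s + t) = π s (f k t) by simpa using h t 0
  induction k with
  | zero => intro s t; simp [hf0, hπadd]
  | succ k ih =>
    intro s t
    have hshift := (hf k (s + t)).comp_const_add s
    simp only [ih] at hshift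
    exact hshift.unique ((π s).hasTVSDerivAt_comp (hf k t))

theorem exists_nhds_zero_exp_bound {E F : Type*} [AddCommGroup E] [Module ℝ E]
    [TopologicalSpace E] [ContinuousAdd E] [BaireSpace E]
    [AddCommGroup F] [Module ℝ F] [TopologicalSpace F]
    (π : ℝ → E →L[ℝ] F) (p : Seminorm ℝ F) (hp : Continuous p)
    (hexp : ∀ v : E, ∃ lam > 0, ∃ M : ℝ, ∀ t : ℝ, Real.exp (-lam * |t|) * p (π t v) ≤ M) :
    ∃ lam > 0, ∃ C : ℝ, ∃ V ∈ 𝓝 (0 : E), ∀ w ∈ V, ∀ t : ℝ,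
      p (π t w) ≤ C * Real.exp (lam * |t|) := by
  set A : ℕ → Set E := fun n => {v | ∀ t : ℝ, p (π t v) ≤ (n + 1) * Real.exp ((n + 1) * |t|)}
  have hA_closed : ∀ n, IsClosed (A n) := fun n => by
    simp only [A, Set.ofPred_forall]
    exact isClosed_iInter fun t => isClosed_le (hp.comp (π t).continuous) continuous_const
  have hA_cover : ⋃ n, A n = Set.univ := by
    refine Set.eq_univ_of_forall fun v => Set.mem_iUnion.2 ?_
    obtain ⟨lam, -, M, hM⟩ := hexp v
    obtain ⟨n, hn⟩ := exists_nat_ge (max lam M)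
    refine ⟨n, fun t => ?_⟩
    have hbound : p (π t v) ≤ Real.exp (lam * |t|) * M := by
      rw [← inv_mul_le_iff₀ (Real.exp_pos _), ← Real.exp_neg, ← neg_mul]
      exact hM t
    have hlam : lam ≤ n + 1 := by linarith [le_max_left lam M]
    have hM : M ≤ n + 1 := by linarith [le_max_right lam M]
    exact hbound.trans (by rw [mul_comm]; gcongr)
  obtain ⟨n, x, hx⟩ := nonempty_interior_of_iUnion_of_closed hA_closed hA_cover
  have hV : (x + ·) ⁻¹' A n ∈ 𝓝 (0 : E) :=
    (continuous_const_add x).tendsto' 0 x (add_zero x) (mem_interior_iff_mem_nhds.1 hx)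
  refine ⟨n + 1, by positivity, 2 * (n + 1), _, hV, fun w hw t => ?_⟩
  calc p (π t w) = p (π t (x + w) - π t x) := by simp
    _ ≤ p (π t (x + w)) + p (π t x) := map_sub_le_add p _ _
    _ ≤ _ := by linarith [hw t, interior_subset hx t]

theorem Bornology.IsVonNBounded.exists_le_mul_of_forall_le {𝕜 E ι : Type*}
    [NontriviallyNormedField 𝕜] [AddCommGroup E] [Module 𝕜 E] [TopologicalSpace E] {S V : Set E}
    (hS : IsVonNBounded 𝕜 S) (hV : V ∈ 𝓝 (0 : E)) {q : ι → Seminorm 𝕜 E} {C : ι → ℝ}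
    (hC : ∀ i, ∀ w ∈ V, q i w ≤ C i) : ∃ c : ℝ, ∀ i, ∀ x ∈ S, q i x ≤ c * C i := by
  obtain ⟨r, -, hr⟩ := (hS hV).exists_pos
  obtain ⟨c, hc⟩ := NormedField.exists_lt_norm 𝕜 r
  refine ⟨‖c‖, fun i x hx => ?_⟩
  obtain ⟨w, hw, rfl⟩ := hr c hc.le hx
  rw [map_smul_eq_mul]
  exact mul_le_mul_of_nonneg_left (hC i w hw) (norm_nonneg c)

theorem stmt19_general {E : Type*} [AddCommGroup E] [Module ℝ E] [UniformSpace E]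
    [IsUniformAddGroup E] [ContinuousSMul ℝ E] [LocallyConvexSpace ℝ E]
    [CompleteSpace E] [TopologicalSpace.MetrizableSpace E]
    (π : ℝ → E →L[ℝ] E)
    (hπadd : ∀ s t : ℝ, π (s + t) = (π s).comp (π t))
    (hexp : ∀ (v : E) (p : Seminorm ℝ E), Continuous p →
      ∃ lam > 0, ∃ M : ℝ, ∀ t : ℝ, Real.exp (-lam * |t|) * p (π t v) ≤ M)
    (B : Set E) (D : E → ℕ → ℝ → E)
    (hD0 : ∀ v ∈ B, ∀ t : ℝ, D v 0 t = π t v)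
    (hDderiv : ∀ v ∈ B, ∀ (k : ℕ) (t : ℝ), HasTVSDerivAt (D v k) (D v (k + 1) t) t) :
    (∀ p : Seminorm ℝ E, Continuous p → ∀ k : ℕ, ∃ M : ℝ, ∀ v ∈ B, p (D v k 0) ≤ M) ↔
    (∀ p : Seminorm ℝ E, Continuous p → ∃ lam > 0, ∀ k : ℕ, ∃ M : ℝ, ∀ v ∈ B, ∀ t : ℝ,
      Real.exp (-lam * |t|) * p (D v k t) ≤ M) := by
  have : (𝓤 E).IsCountablyGenerated := IsUniformAddGroup.uniformity_countably_generated
  have horbit : ∀ v ∈ B, ∀ k t, D v k t = π t (D v k 0) := fun v hv =>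
    orbit_derivative_eq_apply π hπadd (hD0 v hv) (hDderiv v hv)
  refine ⟨fun hL p hp => ?_, fun hR p hp k => ?_⟩
  · obtain ⟨lam, hlam, C, V, hV, hCV⟩ := exists_nhds_zero_exp_bound π p hp (hexp · p hp)
    refine ⟨lam, hlam, fun k => ?_⟩
    have hBk : IsVonNBounded ℝ ((D · k 0) '' B) := by
      refine ((PolynormableSpace.withSeminorms ℝ E).isVonNBounded_iff_seminorm_bddAbove).2
        fun q => ?_
      obtain ⟨M, hM⟩ := hL q.1 q.2 k
      exact ⟨M, Set.forall_mem_image.2 (Set.forall_mem_image.2 hM)⟩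
    obtain ⟨c, hc⟩ := hBk.exists_le_mul_of_forall_le (q := fun t => p.comp (π t).toLinearMap)
      hV fun t w hw => hCV w hw t
    refine ⟨c * C, fun v hv t => ?_⟩
    calc Real.exp (-lam * |t|) * p (D v k t)
        ≤ Real.exp (-lam * |t|) * (c * (C * Real.exp (lam * |t|))) := by
          rw [horbit v hv]
          gcongr
          exact hc t _ (Set.mem_image_of_mem _ hv)
      _ = c * C := by
          rw [neg_mul, Real.exp_neg]
          field_simp
  · obtain ⟨_, -, hbound⟩ := hR p hp
    obtain ⟨M, hM⟩ := hbound k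
    exact ⟨M, fun v hv => by simpa using hM v hv 0⟩

/-- For a representation of exponential type `π` of `ℝ` on a Fréchet
space `E`, a set `B` of smooth vectors (with iterated orbit derivatives `D v k`, so
`γ_v^{(k)} = D v k` and `π((d/dt)^k)v = D v k 0`) is bounded in the canonical topology
of `E^∞` iff the family of orbit maps `{γ_v : v ∈ B}` is a bounded subset of
`O_C^exp(ℝ, E)`: for every continuous seminorm `p` there is `λ > 0` with
`sup_{v ∈ B, t ∈ ℝ, k} e^{-λ|t|} p(γ_v^{(k)}(t)) < ∞` for each `k`. -/
theorem stmt19 {E : Type*} [AddCommGroup E] [Module ℝ E] [UniformSpace E]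
    [IsUniformAddGroup E] [ContinuousSMul ℝ E] [LocallyConvexSpace ℝ E]
    [CompleteSpace E] [TopologicalSpace.MetrizableSpace E]
    (π : ℝ → E →L[ℝ] E)
    (hπ0 : π 0 = ContinuousLinearMap.id ℝ E)
    (hπadd : ∀ s t : ℝ, π (s + t) = (π s).comp (π t))
    (hπcont : ∀ v : E, Continuous fun t => π t v)
    (hexp : ∀ (v : E) (p : Seminorm ℝ E), Continuous p →
      ∃ lam > 0, ∃ M : ℝ, ∀ t : ℝ, Real.exp (-lam * |t|) * p (π t v) ≤ M)
    (B : Set E) (D : E → ℕ → ℝ → E)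
    (hD0 : ∀ v ∈ B, ∀ t : ℝ, D v 0 t = π t v)
    (hDderiv : ∀ v ∈ B, ∀ (k : ℕ) (t : ℝ), HasTVSDerivAt (D v k) (D v (k + 1) t) t) :
    (∀ p : Seminorm ℝ E, Continuous p → ∀ k : ℕ, ∃ M : ℝ, ∀ v ∈ B, p (D v k 0) ≤ M) ↔
    (∀ p : Seminorm ℝ E, Continuous p → ∃ lam > 0, ∀ k : ℕ, ∃ M : ℝ, ∀ v ∈ B, ∀ t : ℝ,
      Real.exp (-lam * |t|) * p (D v k t) ≤ M) :=
  stmt19_general π hπadd hexp B D hD0 hDderiv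
end
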